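/- arXiv:1311.3644 — 6 statements merged into one kernel-verified Lean document; each statement's English description precedes it below -/
import Mathlib

section
/- Let q be a prime power and let A and B be finite nonzero F_q-subspaces of the algebraic closure of F_q with |A| = |B| = q^d, such that A^{-1} (the set of inverses of nonzero elements of A) is not contained in B. Then |A^{-1} ∩ B| ≤ 2·q^{d-1} − 2. -/
/-!
Let `L_A = ∑_{i ≤ d} a_i X^{q^i}` and `L_B = ∑_{i ≤ d} b_i X^{q^i}` be the subspace polynomials of
`A` and `B`: monic, with root sets exactly `A` and `B`. Since `L_A` has `q^d` distinct roots it is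
separable, and its derivative is `a_0`, so `a_0 ≠ 0`.

Put `T = 1 + q + ⋯ + q^{d-2}` and `z = u^{q(q-1)}`. Because `q^{i+1} = q + q(q-1)(1 + ⋯ + q^{i-1})`,
for `u ∈ A \ {0}` the equation `L_A(u) = 0` becomes `a_0 + u^{q-1} P(z) = 0`, and
`u^{q^d} L_B(u⁻¹) = b_0 u^{q-1} z^T + Q(z)`, with `deg P, deg Q ≤ T`. Eliminating `u^{q-1}`:
`u⁻¹ ∈ B` iff `z` is a root of `Ω = P Q - a_0 b_0 X^T`, and `Ω ≠ 0` because `A⁻¹ ⊄ B`.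
Since `u ↦ u^{q(q-1)}` is at most `(q-1)`-to-one, `|A⁻¹ ∩ B| ≤ (q-1) · 2T = 2q^{d-1} - 2`.
-/

open Polynomial Finset Module

namespace Csajbok

theorem exists_finset_card_eq_finrank_span_eq {R M : Type*} [DivisionRing R] [AddCommGroup M]
    [Module R M] (V : Submodule R M) [FiniteDimensional R V] :
    ∃ s : Finset M, #s = finrank R V ∧ Submodule.span R (s : Set M) = V := by
  classical
  let b := Module.finBasis R V
  refine ⟨univ.image (Subtype.val ∘ b), ?_, ?_⟩
  · rw [card_image_of_injective _ (Subtype.val_injective.comp b.injective), card_univ,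
      Fintype.card_fin]
  · rw [coe_image, coe_univ, Set.image_univ, Set.range_comp, ← V.coe_subtype,
      Submodule.span_image, b.span_eq, Submodule.map_subtype_top]

section Linearized

variable {K : Type*} [Field K]

noncomputable def linearizedPoly (q n : ℕ) (a : ℕ → K) : K[X] :=
  ∑ i ∈ range (n + 1), C (a i) * X ^ q ^ i

@[simp]
theorem eval_linearizedPoly (q n : ℕ) (a : ℕ → K) (x : K) :
    (linearizedPoly q n a).eval x = ∑ i ∈ range (n + 1), a i * x ^ q ^ i := by
  simp [linearizedPoly, eval_finsetSum]

theorem linearizedPoly_monic {q n : ℕ} (hq : 1 < q) {a : ℕ → K} (ha : a n = 1) :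
    (linearizedPoly q n a).Monic ∧ (linearizedPoly q n a).natDegree = q ^ n := by
  have hlow : (∑ i ∈ range n, C (a i) * X ^ q ^ i).degree < ↑(q ^ n) := by
    refine (degree_sum_le _ _).trans_lt
      ((Finset.sup_lt_iff (WithBot.bot_lt_coe _)).2 fun i hi => ?_)
    exact (degree_C_mul_X_pow_le _ _).trans_lt
      (WithBot.coe_lt_coe.2 (Nat.pow_lt_pow_right hq (mem_range.1 hi)))
  have heq : linearizedPoly q n a = X ^ q ^ n + ∑ i ∈ range n, C (a i) * X ^ q ^ i := by
    rw [linearizedPoly, sum_range_succ, ha, C_1, one_mul, add_comm]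
  rw [heq]
  exact ⟨monic_X_pow_add hlow, natDegree_add_eq_left_of_degree_lt (by simpa using hlow) |>.trans
    (natDegree_X_pow _)⟩

theorem derivative_linearizedPoly {q : ℕ} (hq : (q : K) = 0) (n : ℕ) (a : ℕ → K) :
    derivative (linearizedPoly q n a) = C (a 0) := by
  simp [linearizedPoly, sum_range_succ', derivative_X_pow, pow_succ, hq]

theorem ne_zero_of_separable_linearizedPoly {q n : ℕ} (hq : (q : K) = 0) {a : ℕ → K}
    (hsep : (linearizedPoly q n a).Separable) (hdeg : (linearizedPoly q n a).natDegree ≠ 0) :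
    a 0 ≠ 0 := by
  intro h0
  rw [Separable, derivative_linearizedPoly hq, h0, C_0, isCoprime_zero_right] at hsep
  exact hdeg (natDegree_eq_zero_of_isUnit hsep)

theorem separable_and_roots_toFinset_eq [DecidableEq K] {f : K[X]} (hf : f ≠ 0) {s : Finset K}
    (hs : ∀ x ∈ s, f.IsRoot x) (hdeg : f.natDegree ≤ s.card) :
    f.Separable ∧ f.roots.toFinset = s := by
  have hsub : s ⊆ f.roots.toFinset := fun x hx => by simpa [hf] using hs x hx
  have h1 := card_le_card hsub
  have h2 := f.roots.toFinset_card_le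
  have h3 := f.card_roots'
  refine ⟨(nodup_roots_iff_of_splits hf (splits_iff_card_roots.2 (by omega))).1
    (Multiset.toFinset_card_eq_card_iff_nodup.1 (by omega)), ?_⟩
  exact (eq_of_subset_of_card_le hsub (by omega)).symm

variable {F : Type*} [Field F] [Fintype F] [Algebra F K]

section Frobenius

local notation "q" => Fintype.card F

variable (F) in
noncomputable def linearizedMap (n : ℕ) (a : ℕ → K) : K →ₗ[F] K :=
  ∑ i ∈ range (n + 1), a i • ((FiniteField.frobeniusAlgHom F K) ^ i).toLinearMap

theorem linearizedMap_apply (n : ℕ) (a : ℕ → K) (x : K) :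
    linearizedMap F n a x = (linearizedPoly q n a).eval x := by
  simp [linearizedMap, AlgHom.coe_pow, FiniteField.coe_frobeniusAlgHom, pow_iterate]

theorem linearizedMap_succ_eq_pow_sub_mul {n : ℕ} {a : ℕ → K} (ha : a (n + 1) = 0) (c x : K) :
    linearizedMap F (n + 1) (fun i => (if i = 0 then 0 else a (i - 1) ^ q) - c * a i) x =
      linearizedMap F n a x ^ q - c * linearizedMap F n a x := by
  have hfrob := map_sum (FiniteField.frobeniusAlgHom F K) (fun i => a i * x ^ q ^ i) (range (n + 1))
  simp only [FiniteField.frobeniusAlgHom_apply, mul_pow, ← pow_mul, ← pow_succ] at hfrob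
  simp only [linearizedMap_apply, eval_linearizedPoly, sub_mul, sum_sub_distrib, mul_sum, hfrob]
  rw [sum_range_succ' _ (n + 1), sum_range_succ _ (n + 1)]
  simp [ha, mul_assoc]

-- `L ↦ L ^ q - L(v) ^ (q - 1) * L` kills `v` and keeps the kernel of `L`.
theorem exists_linearizedMap_span_le_ker (s : Finset K) :
    ∃ a : ℕ → K, a #s = 1 ∧ (∀ i, #s < i → a i = 0) ∧
      Submodule.span F (s : Set K) ≤ LinearMap.ker (linearizedMap F #s a) := by
  classical
  induction s using Finset.induction_on with
  | empty =>
    exact ⟨Pi.single 0 1, by simp, fun i hi => Pi.single_eq_of_ne hi.ne' _, by simp⟩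
  | insert v s hv ih =>
    obtain ⟨a, han, hagt, hker⟩ := ih
    rw [card_insert_of_notMem hv]
    set c := linearizedMap F #s a v
    have hshift :=
      linearizedMap_succ_eq_pow_sub_mul (F := F) (hagt _ (Nat.lt_succ_self _)) (c ^ (q - 1))
    refine ⟨fun i => (if i = 0 then 0 else a (i - 1) ^ q) - c ^ (q - 1) * a i, ?_,
      fun i hi => ?_, ?_⟩
    · simp [han, hagt]
    · simp [hagt _ (show #s < i - 1 by omega), hagt i (by omega), Fintype.card_ne_zero]
    · rw [coe_insert, Submodule.span_insert, sup_le_iff, Submodule.span_singleton_le_iff_mem]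
      refine ⟨?_, hker.trans fun x hx => ?_⟩
      · rw [LinearMap.mem_ker, hshift, ← pow_succ, Nat.sub_add_cancel Fintype.card_pos, sub_self]
      · rw [LinearMap.mem_ker] at hx ⊢
        simp [hshift, hx, Fintype.card_ne_zero]

end Frobenius

theorem exists_linearizedPoly_isRoot_iff_mem {q d : ℕ} (hq : Fintype.card F = q)
    (V : Submodule F K) (hV : Nat.card V = q ^ d) :
    ∃ a : ℕ → K, a d = 1 ∧ a 0 ≠ 0 ∧
      ∀ x, (linearizedPoly q d a).IsRoot x ↔ x ∈ V := by
  classical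
  subst hq
  have : Finite V := Nat.finite_of_card_ne_zero (by simp [hV, Fintype.card_ne_zero])
  have hd : finrank F V = d := Nat.pow_right_injective (Fintype.one_lt_card (α := F)) <| by
    dsimp only
    rw [← hV, Module.natCard_eq_pow_finrank (K := F), Nat.card_eq_fintype_card]
  obtain ⟨s, hs, hspan⟩ := exists_finset_card_eq_finrank_span_eq V
  obtain ⟨a, had, -, hker⟩ := exists_linearizedMap_span_le_ker (F := F) s
  rw [hs, hd] at had hker
  rw [hspan] at hker
  obtain ⟨hmonic, hdeg⟩ := linearizedPoly_monic (Fintype.one_lt_card (α := F)) had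
  have hVfin : (V : Set K).Finite := Set.toFinite _
  obtain ⟨hsep, hroots⟩ := separable_and_roots_toFinset_eq hmonic.ne_zero (s := hVfin.toFinset)
    (fun x hx => by simpa [linearizedMap_apply] using hker (hVfin.mem_toFinset.1 hx))
    (by rw [hdeg, ← Set.ncard_eq_toFinset_card _ hVfin, ← hV]; exact (Nat.card_coe_set_eq _).ge)
  refine ⟨a, had,
    ne_zero_of_separable_linearizedPoly ?_ hsep (by simp [hdeg, Fintype.card_ne_zero]), fun x => ?_⟩
  · rw [← map_natCast (algebraMap F K), FiniteField.cast_card_eq_zero, map_zero]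
  · rw [← SetLike.mem_coe, ← hVfin.mem_toFinset, ← hroots]
    simp [hmonic.ne_zero]

end Linearized

section Reduction

variable {K : Type*} [Field K]

def repunit (q i : ℕ) : ℕ := ∑ j ∈ range i, q ^ j

theorem repunit_monotone (q : ℕ) : Monotone (repunit q) := fun _ _ h =>
  sum_le_sum_of_subset (range_subset_range.2 h)

theorem pred_mul_repunit_add_one {q : ℕ} (hq : 1 ≤ q) (i : ℕ) :
    (q - 1) * repunit q i + 1 = q ^ i := by
  obtain ⟨r, rfl⟩ : ∃ r, q = r + 1 := ⟨q - 1, by omega⟩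
  rw [Nat.add_sub_cancel, mul_comm, repunit, geom_sum_mul_add]

theorem pow_pow_succ_eq {q : ℕ} (hq : 1 ≤ q) (u : K) (i : ℕ) :
    u ^ q ^ (i + 1) = u ^ q * ((u ^ (q - 1)) ^ q) ^ repunit q i := by
  rw [pow_succ, ← pred_mul_repunit_add_one hq i]
  ring

noncomputable def reducedPoly (q m : ℕ) (a : ℕ → K) : K[X] :=
  ∑ i ∈ range (m + 1), C (a (i + 1)) * X ^ repunit q i

noncomputable def reducedReversePoly (q m : ℕ) (b : ℕ → K) : K[X] :=
  ∑ i ∈ range (m + 1), C (b (i + 1)) * X ^ (repunit q m - repunit q i)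

noncomputable def invInterPoly (q m : ℕ) (a b : ℕ → K) : K[X] :=
  reducedPoly q m a * reducedReversePoly q m b - C (a 0 * b 0) * X ^ repunit q m

variable {q : ℕ} (m : ℕ)

theorem eval_linearizedPoly_eq_reducedPoly (hq : 1 ≤ q) (a : ℕ → K) (u : K) :
    (linearizedPoly q (m + 1) a).eval u =
      a 0 * u + u ^ q * (reducedPoly q m a).eval ((u ^ (q - 1)) ^ q) := by
  rw [eval_linearizedPoly, sum_range_succ', add_comm]
  simp [reducedPoly, eval_finsetSum, pow_pow_succ_eq hq, mul_sum, mul_left_comm]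

theorem eval_linearizedPoly_inv_eq_reducedReversePoly (hq : 1 ≤ q) (b : ℕ → K) {u : K}
    (hu : u ≠ 0) :
    u ^ q ^ (m + 1) * (linearizedPoly q (m + 1) b).eval u⁻¹ =
      b 0 * u ^ (q - 1) * ((u ^ (q - 1)) ^ q) ^ repunit q m +
        (reducedReversePoly q m b).eval ((u ^ (q - 1)) ^ q) := by
  have hterm : ∀ i ≤ m, u ^ q ^ (m + 1) * (u⁻¹) ^ q ^ (i + 1) =
      ((u ^ (q - 1)) ^ q) ^ (repunit q m - repunit q i) := fun i hi => by
    rw [inv_pow, pow_pow_succ_eq hq u, pow_pow_succ_eq hq u,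
      pow_sub₀ _ (by positivity) (repunit_monotone q hi)]
    field_simp
  have hfirst : u ^ q ^ (m + 1) * u⁻¹ = u ^ (q - 1) * ((u ^ (q - 1)) ^ q) ^ repunit q m := by
    rw [pow_pow_succ_eq hq, pow_sub₀ u hu hq, pow_one]
    ring
  rw [eval_linearizedPoly, sum_range_succ', mul_add, mul_sum, add_comm, pow_zero, pow_one]
  congr 1
  · rw [mul_left_comm, hfirst, mul_assoc]
  · simp only [reducedReversePoly, eval_finsetSum, eval_mul, eval_C, eval_pow, eval_X]
    refine sum_congr rfl fun i hi => ?_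
    rw [mul_left_comm, hterm i (Nat.lt_succ_iff.1 (mem_range.1 hi))]

theorem invInterPoly_isRoot_iff (hq : 1 ≤ q) {a b : ℕ → K} (ha0 : a 0 ≠ 0) {u : K}
    (hu : u ≠ 0) (hua : (linearizedPoly q (m + 1) a).IsRoot u) :
    (invInterPoly q m a b).IsRoot ((u ^ (q - 1)) ^ q) ↔
      (linearizedPoly q (m + 1) b).IsRoot u⁻¹ := by
  set z := (u ^ (q - 1)) ^ q
  set P := (reducedPoly q m a).eval z
  have hua' : a 0 * u + u ^ q * P = 0 := by
    rw [← eval_linearizedPoly_eq_reducedPoly m hq]; exact hua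
  have hq' : u ^ q = u * u ^ (q - 1) := by rw [← pow_succ', Nat.sub_add_cancel hq]
  have hP : u ^ (q - 1) * P = -a 0 := by
    have h : u * (u ^ (q - 1) * P + a 0) = 0 := by linear_combination hua' - P * hq'
    linear_combination (mul_eq_zero.1 h).resolve_left hu
  have hP0 : P ≠ 0 := by rintro h; simp [h, ha0] at hP
  have heval : (invInterPoly q m a b).eval z =
      P * (u ^ q ^ (m + 1) * (linearizedPoly q (m + 1) b).eval u⁻¹) := by
    rw [eval_linearizedPoly_inv_eq_reducedReversePoly m hq b hu]
    simp only [invInterPoly, eval_sub, eval_mul, eval_C, eval_pow, eval_X]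
    linear_combination (-(b 0) * z ^ repunit q m) * hP
  simp [IsRoot.def, heval, hP0, hu]

theorem natDegree_invInterPoly_le (a b : ℕ → K) :
    (invInterPoly q m a b).natDegree ≤ 2 * repunit q m := by
  have hP : (reducedPoly q m a).natDegree ≤ repunit q m :=
    natDegree_sum_le_of_forall_le _ _ fun i hi => (natDegree_C_mul_X_pow_le _ _).trans
      (repunit_monotone q (Nat.lt_succ_iff.1 (mem_range.1 hi)))
  have hQ : (reducedReversePoly q m b).natDegree ≤ repunit q m :=
    natDegree_sum_le_of_forall_le _ _ fun _ _ =>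
      (natDegree_C_mul_X_pow_le _ _).trans (Nat.sub_le _ _)
  refine (natDegree_sub_le _ _).trans (max_le ?_ ?_)
  · exact natDegree_mul_le.trans (by omega)
  · exact (natDegree_C_mul_X_pow_le _ _).trans (by omega)

end Reduction

theorem card_le_mul_natDegree_of_isRoot {R : Type*} [CommRing R] [IsDomain R] [DecidableEq R]
    (s : Finset R) {r : ℕ} (hr : 0 < r) {f : R → R} (hf : Function.Injective f) {g : R[X]}
    (hg : g ≠ 0) (hs : ∀ u ∈ s, g.IsRoot (f (u ^ r))) : #s ≤ r * g.natDegree := by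
  have hfib : ∀ w ∈ s.image (· ^ r), #{u ∈ s | u ^ r = w} ≤ r := fun w _ =>
    calc #{u ∈ s | u ^ r = w} ≤ #(nthRoots r w).toFinset :=
          card_le_card fun u hu => by simp_all [mem_nthRoots hr]
      _ ≤ r := (Multiset.toFinset_card_le _).trans (card_nthRoots r w)
  calc #s ≤ r * #(s.image (· ^ r)) := card_le_mul_card_image s r hfib
    _ = r * #((s.image (· ^ r)).image f) := by rw [card_image_of_injective _ hf]
    _ ≤ r * #g.roots.toFinset := by
      gcongr
      intro w hw
      simp only [mem_image] at hw
      obtain ⟨_, ⟨u, hu, rfl⟩, rfl⟩ := hw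
      simpa [hg] using hs u hu
    _ ≤ r * g.natDegree := by gcongr; exact (Multiset.toFinset_card_le _).trans g.card_roots'

end Csajbok

open Csajbok

theorem stmt0_general (F : Type*) [Field F] [Fintype F]
    (K : Type*) [Field K] [Algebra F K]
    (q d : ℕ) (hq : Fintype.card F = q) (hd : 1 ≤ d)
    (A B : Submodule F K)
    (hA : Nat.card A = q ^ d) (hB : Nat.card B = q ^ d)
    (hAB : ¬ ((fun x => x⁻¹) '' ((A : Set K) \ {0}) ⊆ (B : Set K))) :
    Nat.card ((fun x => x⁻¹) '' ((A : Set K) \ {0}) ∩ (B : Set K) : Set K)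
      ≤ 2 * q ^ (d - 1) - 2 := by
  classical
  obtain ⟨m, rfl⟩ : ∃ m, d = m + 1 := ⟨d - 1, by omega⟩
  have hq1 : 1 < q := hq ▸ Fintype.one_lt_card
  obtain ⟨a, -, ha0, hAroots⟩ := exists_linearizedPoly_isRoot_iff_mem hq A hA
  obtain ⟨b, -, -, hBroots⟩ := exists_linearizedPoly_isRoot_iff_mem hq B hB
  have hroot : ∀ u ∈ A, u ≠ 0 →
      ((invInterPoly q m a b).IsRoot ((u ^ (q - 1)) ^ q) ↔ u⁻¹ ∈ B) := fun u huA hu => by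
    rw [← hBroots, invInterPoly_isRoot_iff m hq1.le ha0 hu ((hAroots u).2 huA)]
  have hΩ : invInterPoly q m a b ≠ 0 := by
    obtain ⟨_, ⟨u, ⟨huA, hu⟩, rfl⟩, huB⟩ := Set.not_subset.1 hAB
    exact fun h => huB ((hroot u huA hu).1 (by simp [h]))
  have hfrob : Function.Injective fun x : K => x ^ q :=
    hq ▸ (FiniteField.frobeniusAlgHom F K).toRingHom.injective
  have : Finite A := Nat.finite_of_card_ne_zero (by simp [hA]; omega)
  have hT : (((A : Set K) \ {0}) ∩ (fun x => x⁻¹) ⁻¹' (B : Set K)).Finite :=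
    (Set.toFinite (A : Set K)).subset (Set.inter_subset_left.trans Set.sdiff_subset)
  rw [← Set.image_inter_preimage, Nat.card_image_of_injective inv_injective,
    Nat.card_eq_card_finite_toFinset hT]
  calc #hT.toFinset ≤ (q - 1) * (invInterPoly q m a b).natDegree :=
        card_le_mul_natDegree_of_isRoot _ (by omega) hfrob hΩ fun u hu => by
          simp only [Set.Finite.mem_toFinset, Set.mem_inter_iff, Set.mem_sdiff] at hu
          exact (hroot u hu.1.1 hu.1.2).2 hu.2
    _ ≤ (q - 1) * (2 * repunit q m) := by gcongr; exact natDegree_invInterPoly_le m a b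
    _ = 2 * q ^ (m + 1 - 1) - 2 := by
        rw [Nat.add_sub_cancel, ← pred_mul_repunit_add_one hq1.le m, mul_add, mul_one,
          Nat.add_sub_cancel, mul_left_comm]

/-- Csajbók's bound: if `A` and `B` are `F_q`-subspaces of the algebraic closure of `F_q`
of the same size `q^d` and `A⁻¹ ⊄ B`, then `|A⁻¹ ∩ B| ≤ 2q^{d-1} - 2`. -/
theorem stmt0 (F : Type*) [Field F] [Fintype F]
    (K : Type*) [Field K] [Algebra F K] [IsAlgClosure F K]
    (q d : ℕ) (hq : Fintype.card F = q) (hd : 1 ≤ d)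
    (A B : Submodule F K)
    (hA : Nat.card A = q ^ d) (hB : Nat.card B = q ^ d)
    (hAB : ¬ ((fun x => x⁻¹) '' ((A : Set K) \ {0}) ⊆ (B : Set K))) :
    Nat.card ((fun x => x⁻¹) '' ((A : Set K) \ {0}) ∩ (B : Set K) : Set K)
      ≤ 2 * q ^ (d - 1) - 2 :=
  stmt0_general F K q d hq hd A B hA hB hAB
end

section
/- Let A(x) = ∑_{i=0}^{d} a_i x^{q^i} and B(x) = ∑_{i=0}^{d} b_i x^{q^i} be q-polynomials over the algebraic closure of F_q with a_d = b_d = 1. Define C(x) = x^{q^{d-1}-1} − (∑_{i=0}^{d-1} a_i x^{q^{d-1}-q^i})·(∑_{j=0}^{d-1} b_j x^{q^j-1}). Then every common root of x^{q^d}·A(1/x) and B(x)/x is a root of C(x), and deg C ≤ 2q^{d-1} − 2 when C ≠ 0. -/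
open Polynomial

/-- Every common root of `x^{q^d} A(1/x)` and `B(x)/x` is a root of the polynomial
`C(x) = x^{q^{d-1}-1} - (∑_{i<d} a_i x^{q^{d-1}-q^i})(∑_{j<d} b_j x^{q^j-1})`, whose degree is
at most `2q^{d-1} - 2` when it is nonzero. -/
theorem stmt3 (F : Type*) [Field F] [Fintype F]
    (K : Type*) [Field K] [Algebra F K] [IsAlgClosure F K]
    (q d : ℕ) (hq : Fintype.card F = q) (hd : 1 ≤ d)
    (a b : ℕ → K) (had : a d = 1) (hbd : b d = 1) (h0 : a 0 * b 0 ≠ 0)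
    (Ahat Bdiv Cpoly : K[X])
    (hAhat : Ahat = ∑ i ∈ Finset.range (d + 1), C (a i) * X ^ (q ^ d - q ^ i))
    (hBdiv : Bdiv = ∑ i ∈ Finset.range (d + 1), C (b i) * X ^ (q ^ i - 1))
    (hCpoly : Cpoly = X ^ (q ^ (d - 1) - 1) -
        (∑ i ∈ Finset.range d, C (a i) * X ^ (q ^ (d - 1) - q ^ i)) *
        (∑ j ∈ Finset.range d, C (b j) * X ^ (q ^ j - 1))) :
    (∀ x : K, Ahat.IsRoot x → Bdiv.IsRoot x → Cpoly.IsRoot x) ∧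
    (Cpoly ≠ 0 → Cpoly.natDegree ≤ 2 * q ^ (d - 1) - 2) := by
  have hq2 : 2 ≤ q := by
    rw [← hq]; exact Fintype.one_lt_card
  have hq1 : 1 ≤ q ^ (d - 1) := Nat.one_le_pow _ _ (by omega)
  constructor
  · intro x hA hB
    -- x ≠ 0
    have hx : x ≠ 0 := by
      intro hx0
      subst hx0
      rw [Polynomial.IsRoot, hBdiv, eval_finset_sum] at hB
      rw [Finset.sum_eq_single 0] at hB
      · simp at hB
        exact h0 (by rw [hB, mul_zero])
      · intro i hi hne
        have : 1 ≤ q ^ i - 1 := by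
          have : q ≤ q ^ i := Nat.le_self_pow hne q
          omega
        simp [zero_pow (by omega : q ^ i - 1 ≠ 0)]
      · simp
    -- abbreviations
    set S := ∑ i ∈ Finset.range d, a i * x ^ (q ^ (d - 1) - q ^ i) with hS
    set T := ∑ j ∈ Finset.range d, b j * x ^ (q ^ j - 1) with hT
    set u := x ^ (q ^ d - q ^ (d - 1)) with hu
    have hdd : q ^ (d - 1) ≤ q ^ d := Nat.pow_le_pow_right (by omega) (by omega)
    -- from Ahat root: S * u = -1
    have hSu : S * u = -1 := by
      rw [Polynomial.IsRoot, hAhat, eval_finset_sum] at hA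
      simp only [eval_mul, eval_C, eval_pow, eval_X] at hA
      rw [Finset.sum_range_succ, had, Nat.sub_self, pow_zero, one_mul] at hA
      have : S * u = ∑ i ∈ Finset.range d, a i * x ^ (q ^ d - q ^ i) := by
        rw [hS, Finset.sum_mul]
        refine Finset.sum_congr rfl fun i hi => ?_
        have hi' : i ≤ d - 1 := by
          have := Finset.mem_range.mp hi; omega
        have hii : q ^ i ≤ q ^ (d - 1) := Nat.pow_le_pow_right (by omega) hi'
        rw [mul_assoc, hu, ← pow_add]
        congr 2
        omega
      rw [this]
      linear_combination hA
    -- from Bdiv root: T = -x^(q^d-1)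
    have hTx : T = -x ^ (q ^ d - 1) := by
      rw [Polynomial.IsRoot, hBdiv, eval_finset_sum] at hB
      simp only [eval_mul, eval_C, eval_pow, eval_X] at hB
      rw [Finset.sum_range_succ, hbd, one_mul] at hB
      rw [hT]
      linear_combination hB
    -- conclude
    rw [Polynomial.IsRoot, hCpoly]
    simp only [eval_sub, eval_mul, eval_pow, eval_X, eval_finset_sum, eval_C]
    rw [← hS, ← hT]
    have key : (x ^ (q ^ (d - 1) - 1) - S * T) * u = 0 := by
      have h1 : x ^ (q ^ (d - 1) - 1) * u = x ^ (q ^ d - 1) := by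
        rw [hu, ← pow_add]
        congr 1
        omega
      calc (x ^ (q ^ (d - 1) - 1) - S * T) * u
          = x ^ (q ^ (d - 1) - 1) * u - (S * u) * T := by ring
        _ = x ^ (q ^ d - 1) - (-1) * (-x ^ (q ^ d - 1)) := by rw [h1, hSu, hTx]
        _ = 0 := by ring
    have hu0 : u ≠ 0 := pow_ne_zero _ hx
    exact (mul_eq_zero.mp key).resolve_right hu0
  · intro _
    rw [hCpoly]
    refine le_trans (natDegree_sub_le _ _) (max_le ?_ ?_)
    · rw [natDegree_X_pow]
      omega
    · refine le_trans (natDegree_mul_le) ?_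
      have h1 : (∑ i ∈ Finset.range d, C (a i) * X ^ (q ^ (d - 1) - q ^ i)).natDegree
          ≤ q ^ (d - 1) - 1 := by
        refine Polynomial.natDegree_sum_le_of_forall_le _ _ fun i hi => ?_
        refine le_trans (natDegree_C_mul_le _ _) ?_
        rw [natDegree_X_pow]
        have : 1 ≤ q ^ i := Nat.one_le_pow _ _ (by omega)
        omega
      have h2 : (∑ j ∈ Finset.range d, C (b j) * X ^ (q ^ j - 1)).natDegree
          ≤ q ^ (d - 1) - 1 := by
        refine Polynomial.natDegree_sum_le_of_forall_le _ _ fun j hj => ?_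
        refine le_trans (natDegree_C_mul_le _ _) ?_
        rw [natDegree_X_pow]
        have : q ^ j ≤ q ^ (d - 1) :=
          Nat.pow_le_pow_right (by omega) (by have := Finset.mem_range.mp hj; omega)
        omega
      omega
end

section
/- Let A and B be finite nonzero F_q-subspaces of the algebraic closure of F_q of the same size q^d, and let A(x), B(x) be the associated monic q-polynomials. The polynomial C(x) = x^{q^{d-1}-1} − (∑_{i=0}^{d-1} a_i x^{q^{d-1}-q^i})·(∑_{j=0}^{d-1} b_j x^{q^j-1}) is the zero polynomial if and only if A(x) = x^{q^d} + a_0 x and B(x) = x^{q^d} + a_0^{-1} x, in which case A and B are F_{q^d}-subspaces and B = A^{-1} ∪ {0}. -/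
open Polynomial

private lemma aux_pow_eq {q : ℕ} (hq : 2 ≤ q) {i j k : ℕ} (hk : 1 ≤ k)
    (h : q ^ j + q ^ k = q ^ i + 1) : j = 0 ∧ i = k := by
  have hinj := Nat.pow_right_injective hq
  rcases Nat.eq_zero_or_pos j with rfl | hj
  · simp only [pow_zero] at h
    have : q ^ i = q ^ k := by omega
    exact ⟨rfl, hinj this⟩
  · rcases Nat.eq_zero_or_pos i with rfl | hi
    · have h2 : q ≤ q ^ j := Nat.le_self_pow (by omega) q
      have h3 : q ≤ q ^ k := Nat.le_self_pow (by omega) q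
      simp only [pow_zero] at h; omega
    · exfalso
      have e1 : q ^ j = q * q ^ (j - 1) := by
        conv_lhs => rw [show j = (j-1)+1 by omega]
        rw [pow_succ']
      have e2 : q ^ k = q * q ^ (k - 1) := by
        conv_lhs => rw [show k = (k-1)+1 by omega]
        rw [pow_succ']
      have e3 : q ^ i = q * q ^ (i - 1) := by
        conv_lhs => rw [show i = (i-1)+1 by omega]
        rw [pow_succ']
      have hdvd : q ∣ q ^ j + q ^ k := by
        rw [e1, e2]; exact Dvd.dvd.add (dvd_mul_right q _) (dvd_mul_right q _)
      rw [h, e3] at hdvd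
      have h1 : q ∣ 1 := (Nat.dvd_add_right (dvd_mul_right q _)).mp hdvd
      have := Nat.le_of_dvd one_pos h1
      omega

/-- The polynomial `C(x)` vanishes identically if and only if `A(x) = x^{q^d} + a_0 x` and
`B(x) = x^{q^d} + a_0⁻¹ x`, in which case `A` and `B` are `F_{q^d}`-subspaces and
`B = A⁻¹ ∪ {0}`. -/
theorem stmt4 (F : Type*) [Field F] [Fintype F]
    (K : Type*) [Field K] [Algebra F K] [IsAlgClosure F K]
    (q d : ℕ) (hq : Fintype.card F = q) (hd : 1 ≤ d)
    (A B : Submodule F K) [Fintype A] [Fintype B]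
    (hA : Fintype.card A = q ^ d) (hB : Fintype.card B = q ^ d)
    (a b : ℕ → K) (had : a d = 1) (hbd : b d = 1) (h0 : a 0 * b 0 ≠ 0)
    (hPA : (∏ x : A, (X - C (x : K))) = ∑ i ∈ Finset.range (d + 1), C (a i) * X ^ q ^ i)
    (hPB : (∏ x : B, (X - C (x : K))) = ∑ i ∈ Finset.range (d + 1), C (b i) * X ^ q ^ i)
    (Cpoly : K[X])
    (hCpoly : Cpoly = X ^ (q ^ (d - 1) - 1) -
        (∑ i ∈ Finset.range d, C (a i) * X ^ (q ^ (d - 1) - q ^ i)) *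
        (∑ j ∈ Finset.range d, C (b j) * X ^ (q ^ j - 1))) :
    (Cpoly = 0 ↔
      ((∑ i ∈ Finset.range (d + 1), C (a i) * X ^ q ^ i : K[X]) = X ^ q ^ d + C (a 0) * X ∧
       (∑ i ∈ Finset.range (d + 1), C (b i) * X ^ q ^ i : K[X]) = X ^ q ^ d + C (a 0)⁻¹ * X)) ∧
    (Cpoly = 0 →
      ((∀ γ : K, γ ^ q ^ d = γ → ∀ x ∈ (A : Set K), γ * x ∈ (A : Set K)) ∧
       (∀ γ : K, γ ^ q ^ d = γ → ∀ x ∈ (B : Set K), γ * x ∈ (B : Set K)) ∧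
       (B : Set K) = (fun x => x⁻¹) '' ((A : Set K) \ {0}) ∪ {0})) := by
  subst hCpoly
  have hq2 : 2 ≤ q := by rw [← hq]; exact Fintype.one_lt_card
  have hinj := Nat.pow_right_injective hq2
  have hpowle : ∀ i, i < d → q ^ i ≤ q ^ (d - 1) := fun i hi =>
    Nat.pow_le_pow_right (by omega) (by omega)
  have hpow2 : ∀ i : ℕ, 1 ≤ i → 2 ≤ q ^ i := fun i hi =>
    le_trans hq2 (Nat.le_self_pow (by omega) q)
  have hpow1 : ∀ i : ℕ, 1 ≤ q ^ i := fun i => Nat.one_le_pow _ _ (by omega)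
  have ha0 : a 0 ≠ 0 := left_ne_zero_of_mul h0
  have h0d : 0 < d := by omega
  have hb0ne : b 0 ≠ 0 := right_ne_zero_of_mul h0
  -- coefficient formula for the product
  have hcoeffP : ∀ n, ((∑ i ∈ Finset.range d, C (a i) * X ^ (q ^ (d - 1) - q ^ i)) *
      (∑ j ∈ Finset.range d, C (b j) * X ^ (q ^ j - 1))).coeff n
      = ∑ i ∈ Finset.range d, ∑ j ∈ Finset.range d,
          if (q ^ (d - 1) - q ^ i) + (q ^ j - 1) = n then a i * b j else 0 := by
    intro n
    rw [Finset.sum_mul_sum, finset_sum_coeff]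
    refine Finset.sum_congr rfl fun i _ => ?_
    rw [finset_sum_coeff]
    refine Finset.sum_congr rfl fun j _ => ?_
    rw [mul_mul_mul_comm, ← C_mul, ← pow_add, coeff_C_mul, coeff_X_pow]
    simp [eq_comm, mul_ite]
  -- coefficient formula for a linearized sum
  have hcoeffS : ∀ (c : ℕ → K) n,
      ((∑ i ∈ Finset.range (d+1), C (c i) * X ^ (q ^ i)) : K[X]).coeff n
      = ∑ i ∈ Finset.range (d+1), if q ^ i = n then c i else 0 := by
    intro c n
    rw [finset_sum_coeff]
    refine Finset.sum_congr rfl fun i _ => ?_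
    rw [coeff_C_mul, coeff_X_pow]
    simp [eq_comm, mul_ite]
  -- forward direction
  have fwd : (X : K[X]) ^ (q ^ (d - 1) - 1) -
        (∑ i ∈ Finset.range d, C (a i) * X ^ (q ^ (d - 1) - q ^ i)) *
        (∑ j ∈ Finset.range d, C (b j) * X ^ (q ^ j - 1)) = 0 →
      ((∑ i ∈ Finset.range (d + 1), C (a i) * X ^ q ^ i : K[X]) = X ^ q ^ d + C (a 0) * X ∧
       (∑ i ∈ Finset.range (d + 1), C (b i) * X ^ q ^ i : K[X]) = X ^ q ^ d + C (a 0)⁻¹ * X) := by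
    intro hC0
    have hX := sub_eq_zero.mp hC0
    have heq : ∀ n, ((X : K[X]) ^ (q ^ (d - 1) - 1)).coeff n
        = ∑ i ∈ Finset.range d, ∑ j ∈ Finset.range d,
            if (q ^ (d - 1) - q ^ i) + (q ^ j - 1) = n then a i * b j else 0 := by
      intro n; rw [hX]; exact hcoeffP n
    -- a k = 0 for 1 ≤ k < d
    have ha : ∀ k, 1 ≤ k → k < d → a k = 0 := by
      intro k hk1 hkd
      have h1 := heq (q ^ (d-1) - q ^ k)
      rw [coeff_X_pow, if_neg] at h1
      · have hcond : ∀ i ∈ Finset.range d, ∀ j ∈ Finset.range d,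
            ((q ^ (d - 1) - q ^ i) + (q ^ j - 1) = q ^ (d-1) - q ^ k) ↔ (i = k ∧ j = 0) := by
          intro i hi j hj
          rw [Finset.mem_range] at hi hj
          constructor
          · intro hc
            have hi' := hpowle i hi
            have hk' := hpowle k hkd
            have hj1 := hpow1 j
            have harith : q ^ j + q ^ k = q ^ i + 1 := by omega
            obtain ⟨hj0, hik⟩ := aux_pow_eq hq2 hk1 harith
            exact ⟨hik, hj0⟩
          · rintro ⟨rfl, rfl⟩
            simp
        rw [Finset.sum_congr rfl (fun i hi => Finset.sum_congr rfl
          (fun j hj => if_congr (hcond i hi j hj) rfl rfl))] at h1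
        rw [show (∑ i ∈ Finset.range d, ∑ j ∈ Finset.range d,
            if i = k ∧ j = 0 then a i * b j else 0) = a k * b 0 by
          simp [ite_and, Finset.sum_ite_eq', Finset.mem_range, hkd, h0d]] at h1
        rcases mul_eq_zero.mp h1.symm with h | h
        · exact h
        · exact absurd h hb0ne
      · have h2 := hpowle k hkd
        have h3 := hpow2 k hk1
        have h4 := hpow1 (d-1)
        omega
    -- b k = 0 for 1 ≤ k < d
    have hb : ∀ k, 1 ≤ k → k < d → b k = 0 := by
      intro k hk1 hkd
      have h1 := heq ((q ^ (d-1) - 1) + (q ^ k - 1))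
      rw [coeff_X_pow, if_neg] at h1
      · have hcond : ∀ i ∈ Finset.range d, ∀ j ∈ Finset.range d,
            ((q ^ (d - 1) - q ^ i) + (q ^ j - 1) = (q ^ (d-1) - 1) + (q ^ k - 1)) ↔
              (i = 0 ∧ j = k) := by
          intro i hi j hj
          rw [Finset.mem_range] at hi hj
          constructor
          · intro hc
            have hi' := hpowle i hi
            have hj1 := hpow1 j
            have hk1' := hpow1 k
            have hd1 := hpow1 (d-1)
            have harith : q ^ i + q ^ k = q ^ j + 1 := by omega
            obtain ⟨hi0, hjk⟩ := aux_pow_eq hq2 hk1 harith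
            exact ⟨hi0, hjk⟩
          · rintro ⟨rfl, rfl⟩
            simp
        rw [Finset.sum_congr rfl (fun i hi => Finset.sum_congr rfl
          (fun j hj => if_congr (hcond i hi j hj) rfl rfl))] at h1
        rw [show (∑ i ∈ Finset.range d, ∑ j ∈ Finset.range d,
            if i = 0 ∧ j = k then a i * b j else 0) = a 0 * b k by
          simp [ite_and, Finset.sum_ite_eq', Finset.mem_range, hkd, h0d]] at h1
        rcases mul_eq_zero.mp h1.symm with h | h
        · exact absurd h ha0
        · exact h
      · have h3 := hpow2 k hk1
        have h4 := hpow1 (d-1)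
        omega
    -- a 0 * b 0 = 1
    have hab : a 0 * b 0 = 1 := by
      have h1 := heq (q ^ (d-1) - 1)
      rw [coeff_X_pow, if_pos rfl] at h1
      have hcond : ∀ i ∈ Finset.range d, ∀ j ∈ Finset.range d,
          ((q ^ (d - 1) - q ^ i) + (q ^ j - 1) = q ^ (d-1) - 1) ↔ (j = i) := by
        intro i hi j hj
        rw [Finset.mem_range] at hi hj
        constructor
        · intro hc
          have hi' := hpowle i hi
          have hj1 := hpow1 j
          have hd1 := hpow1 (d-1)
          have : q ^ j = q ^ i := by omega
          exact hinj this
        · rintro rfl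
          have hj' := hpowle j hj
          have hj1 := hpow1 j
          have hd1 := hpow1 (d-1)
          omega
      rw [Finset.sum_congr rfl (fun i hi => Finset.sum_congr rfl
        (fun j hj => if_congr (hcond i hi j hj) rfl rfl))] at h1
      rw [show (∑ i ∈ Finset.range d, ∑ j ∈ Finset.range d,
          if j = i then a i * b j else 0) = ∑ i ∈ Finset.range d, a i * b i by
        refine Finset.sum_congr rfl fun i hi => ?_
        rw [Finset.sum_ite_eq' _ i, if_pos hi]] at h1
      rw [Finset.sum_eq_single_of_mem 0 (Finset.mem_range.mpr (by omega))
        (fun i hi hi0 => by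
          rw [ha i (by omega) (Finset.mem_range.mp hi), zero_mul])] at h1
      exact h1.symm
    have hb0 : b 0 = (a 0)⁻¹ := by
      field_simp
      linear_combination hab
    constructor
    · have hterm : ∀ i ∈ Finset.range (d+1), C (a i) * X ^ q ^ i
          = (if i = d then (X:K[X]) ^ q ^ d else 0) + (if i = 0 then C (a 0) * X else 0) := by
        intro i hi
        rw [Finset.mem_range] at hi
        rcases eq_or_ne i d with rfl | hid
        · rw [if_pos rfl, if_neg (by omega), had, map_one, one_mul, add_zero]
        · rcases eq_or_ne i 0 with rfl | hi0
          · rw [if_neg hid, if_pos rfl, zero_add, pow_zero, pow_one]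
          · rw [ha i (by omega) (by omega), map_zero, zero_mul, if_neg hid, if_neg hi0,
              add_zero]
      rw [Finset.sum_congr rfl hterm, Finset.sum_add_distrib,
        Finset.sum_ite_eq' _ d, Finset.sum_ite_eq' _ 0,
        if_pos (Finset.mem_range.mpr (by omega)), if_pos (Finset.mem_range.mpr (by omega))]
    · have hterm : ∀ i ∈ Finset.range (d+1), C (b i) * X ^ q ^ i
          = (if i = d then (X:K[X]) ^ q ^ d else 0) + (if i = 0 then C (a 0)⁻¹ * X else 0) := by
        intro i hi
        rw [Finset.mem_range] at hi
        rcases eq_or_ne i d with rfl | hid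
        · rw [if_pos rfl, if_neg (by omega), hbd, map_one, one_mul, add_zero]
        · rcases eq_or_ne i 0 with rfl | hi0
          · rw [if_neg hid, if_pos rfl, zero_add, pow_zero, pow_one, hb0]
          · rw [hb i (by omega) (by omega), map_zero, zero_mul, if_neg hid, if_neg hi0,
              add_zero]
      rw [Finset.sum_congr rfl hterm, Finset.sum_add_distrib,
        Finset.sum_ite_eq' _ d, Finset.sum_ite_eq' _ 0,
        if_pos (Finset.mem_range.mpr (by omega)), if_pos (Finset.mem_range.mpr (by omega))]
  -- backward direction
  have bwd : ((∑ i ∈ Finset.range (d + 1), C (a i) * X ^ q ^ i : K[X]) = X ^ q ^ d + C (a 0) * X ∧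
       (∑ i ∈ Finset.range (d + 1), C (b i) * X ^ q ^ i : K[X]) = X ^ q ^ d + C (a 0)⁻¹ * X) →
      (X : K[X]) ^ (q ^ (d - 1) - 1) -
        (∑ i ∈ Finset.range d, C (a i) * X ^ (q ^ (d - 1) - q ^ i)) *
        (∑ j ∈ Finset.range d, C (b j) * X ^ (q ^ j - 1)) = 0 := by
    rintro ⟨hAid, hBid⟩
    have ha : ∀ k, 1 ≤ k → k < d → a k = 0 := by
      intro k hk1 hkd
      have h1 := congrArg (fun p => Polynomial.coeff p (q ^ k)) hAid
      rw [hcoeffS a (q ^ k)] at h1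
      rw [Finset.sum_congr rfl (fun i _ => if_congr
        ⟨fun h => hinj h, fun h => by rw [h]⟩ rfl rfl : ∀ i ∈ Finset.range (d+1),
          (if q ^ i = q ^ k then a i else 0) = if i = k then a i else 0),
        Finset.sum_ite_eq' _ k, if_pos (Finset.mem_range.mpr (by omega))] at h1
      rw [coeff_add, coeff_X_pow, coeff_C_mul, coeff_X] at h1
      have hnd : ¬ (q ^ k = q ^ d) := fun h => by have := hinj h; omega
      have hn1 : ¬ (1 = q ^ k) := by have := hpow2 k hk1; omega
      rw [if_neg hnd, if_neg hn1] at h1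
      simpa using h1
    have hb : ∀ k, 1 ≤ k → k < d → b k = 0 := by
      intro k hk1 hkd
      have h1 := congrArg (fun p => Polynomial.coeff p (q ^ k)) hBid
      rw [hcoeffS b (q ^ k)] at h1
      rw [Finset.sum_congr rfl (fun i _ => if_congr
        ⟨fun h => hinj h, fun h => by rw [h]⟩ rfl rfl : ∀ i ∈ Finset.range (d+1),
          (if q ^ i = q ^ k then b i else 0) = if i = k then b i else 0),
        Finset.sum_ite_eq' _ k, if_pos (Finset.mem_range.mpr (by omega))] at h1
      rw [coeff_add, coeff_X_pow, coeff_C_mul, coeff_X] at h1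
      have hnd : ¬ (q ^ k = q ^ d) := fun h => by have := hinj h; omega
      have hn1 : ¬ (1 = q ^ k) := by have := hpow2 k hk1; omega
      rw [if_neg hnd, if_neg hn1] at h1
      simpa using h1
    have hb0 : b 0 = (a 0)⁻¹ := by
      have h1 := congrArg (fun p => Polynomial.coeff p 1) hBid
      rw [hcoeffS b 1] at h1
      rw [Finset.sum_congr rfl (fun i _ => if_congr
        ⟨fun h => hinj (h.trans (pow_zero q).symm), fun h => by rw [h, pow_zero]⟩ rfl rfl : ∀ i ∈ Finset.range (d+1),
          (if q ^ i = 1 then b i else 0) = if i = 0 then b i else 0),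
        Finset.sum_ite_eq' _ 0, if_pos (Finset.mem_range.mpr (by omega))] at h1
      rw [coeff_add, coeff_X_pow, coeff_C_mul, coeff_X] at h1
      have hnd : ¬ ((1:ℕ) = q ^ d) := by have := hpow2 d hd; omega
      rw [if_neg hnd, if_pos rfl] at h1
      simpa using h1
    have hsA : (∑ i ∈ Finset.range d, C (a i) * X ^ (q ^ (d - 1) - q ^ i))
        = C (a 0) * X ^ (q ^ (d-1) - 1) := by
      have hterm : ∀ i ∈ Finset.range d, C (a i) * X ^ (q ^ (d - 1) - q ^ i)
          = if i = 0 then C (a 0) * X ^ (q ^ (d-1) - 1) else 0 := by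
        intro i hi
        rw [Finset.mem_range] at hi
        rcases eq_or_ne i 0 with rfl | h
        · rw [if_pos rfl, pow_zero]
        · rw [if_neg h, ha i (by omega) hi, map_zero, zero_mul]
      rw [Finset.sum_congr rfl hterm, Finset.sum_ite_eq' _ 0,
        if_pos (Finset.mem_range.mpr (by omega))]
    have hsB : (∑ j ∈ Finset.range d, C (b j) * X ^ (q ^ j - 1)) = C (b 0) := by
      have hterm : ∀ j ∈ Finset.range d, C (b j) * X ^ (q ^ j - 1)
          = if j = 0 then C (b 0) else 0 := by
        intro j hj
        rw [Finset.mem_range] at hj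
        rcases eq_or_ne j 0 with rfl | h
        · rw [if_pos rfl, pow_zero]
          simp
        · rw [if_neg h, hb j (by omega) hj, map_zero, zero_mul]
      rw [Finset.sum_congr rfl hterm, Finset.sum_ite_eq' _ 0,
        if_pos (Finset.mem_range.mpr (by omega))]
    rw [hsA, hsB, hb0]
    rw [show (C (a 0) * X ^ (q ^ (d-1) - 1)) * C ((a 0)⁻¹) = X ^ (q ^ (d-1) - 1) by
      rw [mul_comm, ← mul_assoc, ← C_mul, inv_mul_cancel₀ ha0, C_1, one_mul]]
    exact sub_self _
  refine ⟨⟨fwd, bwd⟩, fun hC0 => ?_⟩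
  obtain ⟨hAid, hBid⟩ := fwd hC0
  -- membership characterizations
  have memA : ∀ y : K, y ∈ A ↔ y ^ q ^ d + a 0 * y = 0 := by
    intro y
    have h1 : (∏ x : A, (y - (x:K))) = y ^ q ^ d + a 0 * y := by
      have h2 := congrArg (Polynomial.eval y) (hPA.trans hAid)
      simpa [Polynomial.eval_prod] using h2
    constructor
    · intro hy
      rw [← h1]
      exact Finset.prod_eq_zero (Finset.mem_univ (⟨y, hy⟩ : A)) (by simp)
    · intro hy
      rw [← h1] at hy
      obtain ⟨x, -, hx⟩ := Finset.prod_eq_zero_iff.mp hy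
      have hyx : y = (x:K) := sub_eq_zero.mp hx
      rw [hyx]; exact x.2
  have memB : ∀ y : K, y ∈ B ↔ y ^ q ^ d + (a 0)⁻¹ * y = 0 := by
    intro y
    have h1 : (∏ x : B, (y - (x:K))) = y ^ q ^ d + (a 0)⁻¹ * y := by
      have h2 := congrArg (Polynomial.eval y) (hPB.trans hBid)
      simpa [Polynomial.eval_prod] using h2
    constructor
    · intro hy
      rw [← h1]
      exact Finset.prod_eq_zero (Finset.mem_univ (⟨y, hy⟩ : B)) (by simp)
    · intro hy
      rw [← h1] at hy
      obtain ⟨x, -, hx⟩ := Finset.prod_eq_zero_iff.mp hy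
      have hyx : y = (x:K) := sub_eq_zero.mp hx
      rw [hyx]; exact x.2
  refine ⟨?_, ?_, ?_⟩
  · intro γ hγ x hx
    rw [SetLike.mem_coe] at hx ⊢
    rw [memA] at hx ⊢
    calc (γ * x) ^ q ^ d + a 0 * (γ * x) = γ * (x ^ q ^ d + a 0 * x) := by
          rw [mul_pow, hγ]; ring
      _ = 0 := by rw [hx, mul_zero]
  · intro γ hγ x hx
    rw [SetLike.mem_coe] at hx ⊢
    rw [memB] at hx ⊢
    calc (γ * x) ^ q ^ d + (a 0)⁻¹ * (γ * x) = γ * (x ^ q ^ d + (a 0)⁻¹ * x) := by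
          rw [mul_pow, hγ]; ring
      _ = 0 := by rw [hx, mul_zero]
  · obtain ⟨m, hm⟩ : ∃ m, q ^ d = m + 1 := ⟨q ^ d - 1, by have := hpow1 d; omega⟩
    have memA' : ∀ y : K, y ≠ 0 → (y ∈ A ↔ y ^ m = -(a 0)) := by
      intro y hy
      rw [memA, hm, pow_succ]
      constructor
      · intro h
        have h2 : y * (y ^ m + a 0) = 0 := by linear_combination h
        rcases mul_eq_zero.mp h2 with h3 | h3
        · exact absurd h3 hy
        · exact eq_neg_of_add_eq_zero_left h3
      · intro h
        rw [h]; ring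
    have memB' : ∀ y : K, y ≠ 0 → (y ∈ B ↔ y ^ m = -(a 0)⁻¹) := by
      intro y hy
      rw [memB, hm, pow_succ]
      constructor
      · intro h
        have h2 : y * (y ^ m + (a 0)⁻¹) = 0 := by linear_combination h
        rcases mul_eq_zero.mp h2 with h3 | h3
        · exact absurd h3 hy
        · exact eq_neg_of_add_eq_zero_left h3
      · intro h
        rw [h]; ring
    ext y
    simp only [Set.mem_union, Set.mem_image, Set.mem_singleton_iff, Set.mem_diff,
      SetLike.mem_coe]
    constructor
    · intro hyB
      rcases eq_or_ne y 0 with rfl | hy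
      · right; rfl
      · left
        refine ⟨y⁻¹, ⟨?_, inv_ne_zero hy⟩, inv_inv y⟩
        apply (memA' y⁻¹ (inv_ne_zero hy)).mpr
        have h1 := (memB' y hy).mp hyB
        rw [inv_pow, h1, inv_neg, inv_inv]
    · intro h
      rcases h with ⟨x, ⟨hxA, hx0⟩, rfl⟩ | rfl
      · apply (memB' x⁻¹ (inv_ne_zero hx0)).mpr
        have h1 := (memA' x hx0).mp hxA
        rw [inv_pow, h1, inv_neg]
      · exact B.zero_mem
end

section
/- Let A and B be two-dimensional F_q-subspaces of the algebraic closure of F_q. Then |A^{-1} ∩ B|/(q−1) ∈ {0, 1, 2, q+1}. Moreover |A^{-1} ∩ B| = q^2 − 1 holds exactly when A is a one-dimensional F_{q^2}-subspace and B = A^{-1} ∪ {0}. -/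
/-!
`A⁻¹ ∩ B` is stable under `F^×`, so it is a union of punctured `F`-lines. If it contains two
independent points `x` and `r x`, then `B = span {x, r x}` and `A = span {x⁻¹, (r x)⁻¹}`; writing a
third point as `y = x (a + b r)` with `y⁻¹ = x⁻¹ (c + d r⁻¹)`, the identity
`(a + b r) (c r + d) = r` shows that either `y` lies on one of the two lines (`b = 0` or `c = 0`) or
`r` is quadratic over `F`. In the quadratic case `L = F⟮r⟯` is a field with `q²` elements,
`B = x L` and `A = x⁻¹ L`, so `A⁻¹ ∩ B = B \ {0}`; and `L` is the set of all roots of `X^{q²} - X`.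
-/

open Module Submodule Polynomial IntermediateField

section

variable {F V : Type*} [Field F] [AddCommGroup V] [Module F V]

theorem Module.finrank_eq_of_natCard_eq_pow {n : ℕ} (hF : 2 ≤ Nat.card F)
    (hV : Nat.card V = Nat.card F ^ n) : finrank F V = n := by
  have : Finite V := Nat.finite_of_card_ne_zero (by rw [hV]; positivity)
  have : Module.Finite F V := Module.Finite.of_finite
  exact Nat.pow_right_injective hF (natCard_eq_pow_finrank.symm.trans hV)

theorem Submodule.eq_span_pair_of_finrank_eq_two {W : Submodule F V} (hW : finrank F W = 2)
    {u v : V} (hu : u ∈ W) (hv : v ∈ W) (huv : LinearIndependent F ![u, v]) :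
    W = span F {u, v} := by
  have : FiniteDimensional F W := Module.finite_of_finrank_eq_succ hW
  refine (eq_of_le_of_finrank_eq (span_le.2 (Set.insert_subset hu (by simpa using hv))) ?_).symm
  rw [hW, ← Matrix.range_cons_cons_empty u v ![], finrank_span_eq_card huv, Fintype.card_fin]

theorem ncard_span_singleton_diff_zero {x : V} (hx : x ≠ 0) :
    (((F ∙ x : Submodule F V) : Set V) \ {0}).ncard = Nat.card F - 1 := by
  rw [Set.ncard_sdiff_singleton_of_mem (zero_mem _), ← Nat.card_coe_set_eq, SetLike.coe_sort_coe,
    natCard_eq_pow_finrank (K := F), finrank_span_singleton hx, pow_one]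

theorem ncard_span_singleton_union_diff_zero [Finite F] {u v : V}
    (huv : LinearIndependent F ![u, v]) :
    (((F ∙ u : Submodule F V) ∪ (F ∙ v : Submodule F V) : Set V) \ {0}).ncard
      = 2 * (Nat.card F - 1) := by
  have hdisj : Disjoint (((F ∙ u : Submodule F V) : Set V) \ {0})
      (((F ∙ v : Submodule F V) : Set V) \ {0}) := by
    rw [Set.disjoint_left]
    rintro _ ⟨hu, hz⟩ ⟨hv, -⟩
    obtain ⟨s, rfl⟩ := mem_span_singleton.1 hu
    obtain ⟨t, hst⟩ := mem_span_singleton.1 hv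
    rw [(huv.eq_zero_of_pair' hst.symm).2, zero_smul] at hst
    exact hz hst.symm
  have : Finite (F ∙ u) := Module.finite_of_finite F
  have : Finite (F ∙ v) := Module.finite_of_finite F
  rw [Set.union_sdiff_distrib,
    Set.ncard_union_eq hdisj (Set.toFinite _).sdiff (Set.toFinite _).sdiff,
    ncard_span_singleton_diff_zero (by simpa using huv.ne_zero 0),
    ncard_span_singleton_diff_zero (by simpa using huv.ne_zero 1), two_mul]

end

theorem Subfield.mem_of_pow_natCard_eq_self {K : Type*} [Field K] (L : Subfield K) [Finite L]
    {γ : K} (hγ : γ ^ Nat.card L = γ) : γ ∈ L := by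
  have hL : 1 < Nat.card L := Finite.one_lt_card
  set P : K[X] := X ^ Nat.card L - X
  have hP : P ≠ 0 := FiniteField.X_pow_card_sub_X_ne_zero K hL
  have hroot : ∀ z : K, z ^ Nat.card L = z → z ∈ P.rootSet K := fun z hz => by
    simp [P, mem_rootSet, hP, hz]
  have : Fintype L := Fintype.ofFinite L
  have hsub : (L : Set K) ⊆ P.rootSet K := fun z hz => hroot z <| by
    simpa [Nat.card_eq_fintype_card] using congrArg Subtype.val (FiniteField.pow_card (⟨z, hz⟩ : L))
  have heq : (L : Set K) = P.rootSet K := by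
    refine Set.eq_of_subset_of_ncard_le hsub ?_ (P.rootSet_finite K)
    calc (P.rootSet K).ncard ≤ P.natDegree := P.ncard_rootSet_le K
      _ = (L : Set K).ncard := FiniteField.X_pow_card_sub_X_natDegree_eq K hL
  rw [← SetLike.mem_coe, heq]
  exact hroot γ hγ

section

variable {F K : Type*} [Field F] [Field K] [Algebra F K]

theorem linearIndependent_pair_mul {x r : K} (hx : x ≠ 0) (hr : r ∉ Set.range (algebraMap F K)) :
    LinearIndependent F ![x, r * x] := by
  refine (LinearIndependent.pair_iff' hx).2 fun a h => hr ⟨a, ?_⟩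
  rw [Algebra.smul_def] at h
  exact mul_right_cancel₀ hx h

theorem inv_notMem_range_algebraMap {r : K} (hr : r ∉ Set.range (algebraMap F K)) :
    r⁻¹ ∉ Set.range (algebraMap F K) := by
  rintro ⟨c, hc⟩
  exact hr ⟨c⁻¹, by rw [map_inv₀, hc, inv_inv]⟩

theorem finrank_adjoin_eq_two {r : K} (hr : r ∉ Set.range (algebraMap F K)) {a b : F}
    (h : r ^ 2 = algebraMap F K a * r + algebraMap F K b) : finrank F F⟮r⟯ = 2 := by
  set p : F[X] := X ^ 2 - (C a * X + C b)
  have hdeg : (C a * X + C b).degree < 2 := (degree_linear_le).trans_lt (by norm_num)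
  have hp : p.Monic := monic_X_pow_sub hdeg
  have hpr : aeval r p = 0 := by simp [p, h]
  have hint : IsIntegral F r := ⟨p, hp, hpr⟩
  have hle : (minpoly F r).natDegree ≤ 2 := by
    have := minpoly.min F r hp hpr
    rw [degree_sub_eq_left_of_degree_lt (by simpa using hdeg)] at this
    exact natDegree_le_of_degree_le (by simpa using this)
  have h1 : (minpoly F r).natDegree ≠ 1 := fun h1 => hr (minpoly.natDegree_eq_one_iff.1 h1)
  have h0 := minpoly.natDegree_pos hint
  rw [adjoin.finrank hint]
  omega

theorem mem_iff_inv_mul_mem_of_finrank_eq_two {W : Submodule F K} (hW : finrank F W = 2)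
    {L : IntermediateField F K} (hL : finrank F L = 2) {x r : K} (hx0 : x ≠ 0)
    (hr : r ∉ Set.range (algebraMap F K)) (hrL : r ∈ L) (hxW : x ∈ W) (hrxW : r * x ∈ W)
    (y : K) : y ∈ W ↔ x⁻¹ * y ∈ L := by
  have hLspan : Subalgebra.toSubmodule L.toSubalgebra = span F {1, r} :=
    eq_span_pair_of_finrank_eq_two
      (by rw [Subalgebra.finrank_toSubmodule, finrank_eq_finrank_subalgebra, hL]) L.one_mem hrL
      (by simpa using linearIndependent_pair_mul one_ne_zero hr)
  change _ ↔ x⁻¹ * y ∈ Subalgebra.toSubmodule L.toSubalgebra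
  rw [hLspan, eq_span_pair_of_finrank_eq_two hW hxW hrxW (linearIndependent_pair_mul hx0 hr),
    mem_span_pair, mem_span_pair]
  refine exists₂_congr fun a b => ?_
  rw [eq_inv_mul_iff_mul_eq₀ hx0, mul_add, mul_smul_comm, mul_smul_comm, mul_one, mul_comm x r]

def invInter (A B : Submodule F K) : Set K := (fun x => x⁻¹) '' ((A : Set K) \ {0}) ∩ B

variable {A B : Submodule F K}

theorem mem_invInter {x : K} : x ∈ invInter A B ↔ x ≠ 0 ∧ x⁻¹ ∈ A ∧ x ∈ B := by
  simp only [invInter, Set.mem_inter_iff, Set.mem_image, Set.mem_sdiff, SetLike.mem_coe,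
    Set.mem_singleton_iff]
  constructor
  · rintro ⟨⟨a, ⟨ha, ha0⟩, rfl⟩, hB⟩
    exact ⟨inv_ne_zero ha0, by rwa [inv_inv], hB⟩
  · rintro ⟨hx0, hxA, hxB⟩
    exact ⟨⟨x⁻¹, ⟨hxA, inv_ne_zero hx0⟩, inv_inv x⟩, hxB⟩

theorem span_singleton_diff_zero_subset_invInter {x : K} (hx : x ∈ invInter A B) :
    ((F ∙ x : Submodule F K) : Set K) \ {0} ⊆ invInter A B := by
  rintro _ ⟨hy, hy0⟩
  obtain ⟨t, rfl⟩ := mem_span_singleton.1 hy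
  obtain ⟨hx0, hxA, hxB⟩ := mem_invInter.1 hx
  have ht : t ≠ 0 := by rintro rfl; simp at hy0
  exact mem_invInter.2 ⟨smul_ne_zero ht hx0, by rw [smul_inv₀]; exact A.smul_mem _ hxA,
    B.smul_mem _ hxB⟩

theorem mem_span_or_finrank_adjoin_eq_two (hA : finrank F A = 2) (hB : finrank F B = 2)
    {x r y : K} (hr : r ∉ Set.range (algebraMap F K)) (hx : x ∈ invInter A B)
    (hrx : r * x ∈ invInter A B) (hy : y ∈ invInter A B) :
    y ∈ F ∙ x ∨ y ∈ F ∙ (r * x) ∨ finrank F F⟮r⟯ = 2 := by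
  obtain ⟨hx0, hxA, hxB⟩ := mem_invInter.1 hx
  obtain ⟨-, hrxA, hrxB⟩ := mem_invInter.1 hrx
  obtain ⟨hy0, hyA, hyB⟩ := mem_invInter.1 hy
  rw [mul_inv] at hrxA
  rw [eq_span_pair_of_finrank_eq_two hB hxB hrxB (linearIndependent_pair_mul hx0 hr),
    mem_span_pair] at hyB
  rw [eq_span_pair_of_finrank_eq_two hA hxA hrxA
    (linearIndependent_pair_mul (inv_ne_zero hx0) (inv_notMem_range_algebraMap hr)),
    mem_span_pair] at hyA
  obtain ⟨a, b, hab⟩ := hyB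
  obtain ⟨c, d, hcd⟩ := hyA
  by_cases hb : b = 0
  · exact Or.inl (mem_span_singleton.2 ⟨a, by simpa [hb] using hab⟩)
  by_cases hc : c = 0
  · refine Or.inr (Or.inl (mem_span_singleton.2 ⟨d⁻¹, ?_⟩))
    rw [← inv_inv y, ← hcd, hc, zero_smul, zero_add, smul_inv₀, mul_inv, inv_inv, inv_inv]
  have hr0 : r ≠ 0 := by rintro rfl; exact hr ⟨0, map_zero _⟩
  have hb' : algebraMap F K b ≠ 0 := by simpa using hb
  have hc' : algebraMap F K c ≠ 0 := by simpa using hc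
  have hkey : (a • x + b • (r * x)) * (c • x⁻¹ + d • (r⁻¹ * x⁻¹)) = 1 := by
    rw [hab, hcd, mul_inv_cancel₀ hy0]
  simp only [Algebra.smul_def] at hkey
  field_simp at hkey
  refine Or.inr (Or.inr (finrank_adjoin_eq_two hr (a := (1 - a * c - b * d) / (b * c))
    (b := -(a * d) / (b * c)) ?_))
  simp only [map_div₀, map_mul, map_sub, map_one, map_neg]
  field_simp
  linear_combination hkey

theorem invInter_cases (hA : finrank F A = 2) (hB : finrank F B = 2) :
    invInter A B = ∅ ∨
    (∃ x ≠ 0, invInter A B = ((F ∙ x : Submodule F K) : Set K) \ {0}) ∨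
    (∃ x y : K, LinearIndependent F ![x, y] ∧
      invInter A B = ((F ∙ x : Submodule F K) ∪ (F ∙ y : Submodule F K) : Set K) \ {0}) ∨
    ∃ x, ∃ L : IntermediateField F K, finrank F L = 2 ∧
      (∀ y, y ∈ A ↔ x * y ∈ L) ∧ ∀ y, y ∈ B ↔ x⁻¹ * y ∈ L := by
  rcases (invInter A B).eq_empty_or_nonempty with h | ⟨x, hx⟩
  · exact Or.inl h
  obtain ⟨hx0, hxA, hxB⟩ := mem_invInter.1 hx
  by_cases hline : invInter A B ⊆ F ∙ x
  · refine Or.inr (Or.inl ⟨x, hx0, subset_antisymm (fun y hy => ⟨hline hy, ?_⟩)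
      (span_singleton_diff_zero_subset_invInter hx)⟩)
    exact (mem_invInter.1 hy).1
  obtain ⟨z, hz, hzx⟩ := Set.not_subset.1 hline
  obtain ⟨r, rfl⟩ : ∃ r, z = r * x := ⟨z / x, (div_mul_cancel₀ z hx0).symm⟩
  have hr : r ∉ Set.range (algebraMap F K) := by
    rintro ⟨c, rfl⟩
    exact hzx (mem_span_singleton.2 ⟨c, Algebra.smul_def c x⟩)
  obtain ⟨-, hrxA, hrxB⟩ := mem_invInter.1 hz
  by_cases hL : finrank F F⟮r⟯ = 2
  · refine Or.inr (Or.inr (Or.inr ⟨x, F⟮r⟯, hL, fun y => ?_,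
      mem_iff_inv_mul_mem_of_finrank_eq_two hB hL hx0 hr (mem_adjoin_simple_self F r) hxB hrxB⟩))
    rw [mul_inv] at hrxA
    simpa using mem_iff_inv_mul_mem_of_finrank_eq_two hA hL (inv_ne_zero hx0)
      (inv_notMem_range_algebraMap hr) (inv_mem (mem_adjoin_simple_self F r)) hxA hrxA y
  have hsub : invInter A B ⊆ ((F ∙ x : Submodule F K) ∪ (F ∙ (r * x) : Submodule F K) : Set K) :=
    fun y hy => by simpa [hL] using mem_span_or_finrank_adjoin_eq_two hA hB hr hx hz hy
  refine Or.inr (Or.inr (Or.inl ⟨x, r * x, linearIndependent_pair_mul hx0 hr,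
    subset_antisymm (fun y hy => ⟨hsub hy, (mem_invInter.1 hy).1⟩) ?_⟩))
  rw [Set.union_sdiff_distrib]
  exact Set.union_subset (span_singleton_diff_zero_subset_invInter hx)
    (span_singleton_diff_zero_subset_invInter hz)

theorem coe_eq_image_inv_union_zero_iff :
    (B : Set K) = (fun x => x⁻¹) '' ((A : Set K) \ {0}) ∪ {0} ↔ ∀ y, y⁻¹ ∈ A ↔ y ∈ B := by
  have hmem : ∀ y, y ∈ (fun x : K => x⁻¹) '' ((A : Set K) \ {0}) ∪ {0} ↔ y⁻¹ ∈ A := by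
    intro y
    rw [Set.image_inv_eq_inv]
    rcases eq_or_ne y 0 with rfl | hy
    · simp [A.zero_mem]
    · simp [hy]
  simp only [Set.ext_iff, SetLike.mem_coe, hmem]
  exact ⟨fun h y => (h y).symm, fun h y => (h y).symm⟩

theorem invInter_eq_diff_zero (h : ∀ y, y⁻¹ ∈ A ↔ y ∈ B) :
    invInter A B = (B : Set K) \ {0} := by
  ext y
  rw [mem_invInter, Set.mem_sdiff, Set.mem_singleton_iff, h]
  tauto

theorem inv_mem_iff_of_forall_mem_iff_mul_mem {L : IntermediateField F K} {x : K}
    (hA : ∀ y, y ∈ A ↔ x * y ∈ L) (hB : ∀ y, y ∈ B ↔ x⁻¹ * y ∈ L) (y : K) :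
    y⁻¹ ∈ A ↔ y ∈ B := by
  rw [hA, hB, ← inv_mem_iff, mul_inv, inv_inv]

theorem mul_mem_of_pow_eq_self [Finite F] {L : IntermediateField F K} (hL : finrank F L = 2)
    {x : K} (hA : ∀ y, y ∈ A ↔ x * y ∈ L) {γ : K} (hγ : γ ^ Nat.card F ^ 2 = γ) {y : K}
    (hy : y ∈ A) : γ * y ∈ A := by
  have : Module.Finite F L := Module.finite_of_finrank_eq_succ hL
  have : Finite L := Module.finite_of_finite F
  have hcard : Nat.card L.toSubfield = Nat.card F ^ 2 := by
    rw [← hL]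
    exact natCard_eq_pow_finrank (K := F) (V := L)
  have hγL : γ ∈ L := L.toSubfield.mem_of_pow_natCard_eq_self (by rwa [hcard])
  rw [hA] at hy ⊢
  rw [mul_left_comm]
  exact L.mul_mem hγL hy

end

theorem stmt7_general (F : Type*) [Field F] [Fintype F]
    (K : Type*) [Field K] [Algebra F K]
    (q : ℕ) (hq : Fintype.card F = q)
    (A B : Submodule F K)
    (hA : Nat.card A = q ^ 2) (hB : Nat.card B = q ^ 2) :
    Nat.card ((fun x => x⁻¹) '' ((A : Set K) \ {0}) ∩ (B : Set K) : Set K)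
        ∈ ({0, q - 1, 2 * (q - 1), q ^ 2 - 1} : Set ℕ) ∧
    (Nat.card ((fun x => x⁻¹) '' ((A : Set K) \ {0}) ∩ (B : Set K) : Set K) = q ^ 2 - 1 ↔
      ((∀ γ : K, γ ^ q ^ 2 = γ → ∀ x ∈ (A : Set K), γ * x ∈ (A : Set K)) ∧
       (B : Set K) = (fun x => x⁻¹) '' ((A : Set K) \ {0}) ∪ {0})) := by
  have hF : Nat.card F = q := Nat.card_eq_fintype_card.trans hq
  have hq2 : 2 ≤ q := hq ▸ Fintype.one_lt_card
  have hsq : 2 * q ≤ q ^ 2 := by nlinarith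
  have hfA : finrank F A = 2 := finrank_eq_of_natCard_eq_pow (by omega) (by rw [hA, hF])
  have hfB : finrank F B = 2 := finrank_eq_of_natCard_eq_pow (by omega) (by rw [hB, hF])
  change Nat.card (invInter A B) ∈ _ ∧ (Nat.card (invInter A B) = _ ↔ _)
  rw [Nat.card_coe_set_eq, coe_eq_image_inv_union_zero_iff]
  have hfield : (∀ y, y⁻¹ ∈ A ↔ y ∈ B) → (invInter A B).ncard = q ^ 2 - 1 := fun h => by
    rw [invInter_eq_diff_zero h, Set.ncard_sdiff_singleton_of_mem B.zero_mem,
      ← Nat.card_coe_set_eq, SetLike.coe_sort_coe, hB]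
  have hcases : (invInter A B).ncard ∈ ({0, q - 1, 2 * (q - 1)} : Set ℕ) ∨
      ((∀ γ : K, γ ^ q ^ 2 = γ → ∀ x ∈ (A : Set K), γ * x ∈ (A : Set K)) ∧
        ∀ y, y⁻¹ ∈ A ↔ y ∈ B) := by
    rcases invInter_cases hfA hfB with h | ⟨x, hx, h⟩ | ⟨x, y, hxy, h⟩ | ⟨x, L, hL, hAL, hBL⟩
    · simp [h]
    · left; rw [h, ncard_span_singleton_diff_zero hx, hF]; simp
    · left; rw [h, ncard_span_singleton_union_diff_zero hxy, hF]; simp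
    · exact Or.inr ⟨fun γ hγ y hy => mul_mem_of_pow_eq_self hL hAL (by rwa [hF]) hy,
        inv_mem_iff_of_forall_mem_iff_mul_mem hAL hBL⟩
  rcases hcases with hn | hP
  · have hne : (invInter A B).ncard ≠ q ^ 2 - 1 := by
      simp only [Set.mem_insert_iff, Set.mem_singleton_iff] at hn
      omega
    refine ⟨by simp only [Set.mem_insert_iff, Set.mem_singleton_iff] at hn ⊢; tauto,
      iff_of_false hne fun hP => hne (hfield hP.2)⟩
  · exact ⟨by simp [hfield hP.2], iff_of_true (hfield hP.2) hP⟩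

/-- For two-dimensional `F_q`-subspaces `A`, `B` of the algebraic closure,
`|A⁻¹ ∩ B|/(q-1) ∈ {0, 1, 2, q+1}`, and `|A⁻¹ ∩ B| = q^2 - 1` holds exactly when `A` is a
one-dimensional `F_{q^2}`-subspace and `B = A⁻¹ ∪ {0}`. -/
theorem stmt7 (F : Type*) [Field F] [Fintype F]
    (K : Type*) [Field K] [Algebra F K] [IsAlgClosure F K]
    (q : ℕ) (hq : Fintype.card F = q)
    (A B : Submodule F K)
    (hA : Nat.card A = q ^ 2) (hB : Nat.card B = q ^ 2) :
    Nat.card ((fun x => x⁻¹) '' ((A : Set K) \ {0}) ∩ (B : Set K) : Set K)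
        ∈ ({0, q - 1, 2 * (q - 1), q ^ 2 - 1} : Set ℕ) ∧
    (Nat.card ((fun x => x⁻¹) '' ((A : Set K) \ {0}) ∩ (B : Set K) : Set K) = q ^ 2 - 1 ↔
      ((∀ γ : K, γ ^ q ^ 2 = γ → ∀ x ∈ (A : Set K), γ * x ∈ (A : Set K)) ∧
       (B : Set K) = (fun x => x⁻¹) '' ((A : Set K) \ {0}) ∪ {0})) :=
  stmt7_general F K q hq A B hA hB
end

section
/- Let q be an odd prime power and let a, b be elements of the algebraic closure of F_q with a^{q+1} = b^{q+1} = −1, a^{(q+1)/2} ≠ b^{(q+1)/2}, and ab ≠ 1. Let A be the set of roots of x^{q^3} + a x^{q^2} − x^q − a x and B the set of roots of x^{q^3} + b x^{q^2} − x^q − b x. Then A and B are F_q-subspaces of size q^3 and |A^{-1} ∩ B| = 2q^2 − 2. -/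
open Polynomial FiniteField

/-!
Write `σ(x) = x^{q^2} - x`. The `q`-polynomial `x^{q^3} + c x^{q^2} - x^q - c x` equals
`σ(x)^q + c σ(x)`; it is `F_q`-linear and separable of degree `q^3` (its derivative is `-c`),
and its roots are `F_{q^2}` together with the `x` such that `σ(x)^{q-1} = -c`.

Hence `A⁻¹ ∩ B` is `F_{q^2}^*` together with the inverses of the `x` such that
`σ(x)^{q-1} = -a` and `σ(x⁻¹)^{q-1} = -b`. Put `y = σ(x)`, one of the `q - 1` roots of
`y^{q-1} = -a`, and `x = y (t - 1) / 2`. Then `x` lies in the second family exactly when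
`t^{q^2} = -t` and `(t^2 - 1)^{q-1} = f`, where `f = (ab)⁻¹` satisfies `f^{(q+1)/2} = 1` and
`f ≠ 1`. For such `t`, `s = (t^2)^{q-1}` is one of the `(q + 1)/2` roots of
`s^{(q+1)/2} = -1`, and `t^2 = (1 - f)/(s - f)`. Each `y` therefore gives `q + 1` points, so the
second family has `(q - 1)(q + 1)` elements.
-/

theorem Set.ncard_eq_ncard_mul_of_ncard_fiber {α β : Type*} {s : Set α} {t : Set β}
    {f : α → β} (hf : Set.MapsTo f s t) (ht : t.Finite) {k : ℕ} (hk : k ≠ 0)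
    (hfib : ∀ b ∈ t, {a ∈ s | f a = b}.ncard = k) : s.ncard = t.ncard * k := by
  have hs : s = ⋃ b ∈ t, {a ∈ s | f a = b} := by
    ext a
    simp only [Set.mem_iUnion, Set.mem_ofPred_eq, exists_prop]
    exact ⟨fun ha => ⟨f a, hf ha, ha, rfl⟩, fun ⟨_, _, ha, _⟩ => ha⟩
  have hfin : ∀ b ∈ t, {a ∈ s | f a = b}.Finite := fun b hb =>
    Set.finite_of_ncard_ne_zero (by rw [hfib b hb]; exact hk)
  have hdisj : t.PairwiseDisjoint fun b => {a ∈ s | f a = b} := fun b _ b' _ hbb' =>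
    Set.disjoint_left.2 fun a ha ha' => hbb' (ha.2.symm.trans ha'.2)
  rw [hs, ht.ncard_biUnion hfin hdisj, finsum_mem_congr rfl hfib,
    finsum_mem_eq_finite_toFinset_sum _ ht, Finset.sum_const, smul_eq_mul,
    Set.ncard_eq_toFinset_card t ht]

section Field

variable {K : Type*} [Field K]

theorem separable_of_derivative_eq_C {f : K[X]} {u : K} (hu : u ≠ 0)
    (h : derivative f = C u) : f.Separable :=
  ⟨0, C u⁻¹, by rw [h, zero_mul, zero_add, ← C_mul, inv_mul_cancel₀ hu, C_1]⟩

theorem ncard_setOf_eval_eq_zero [IsAlgClosed K] {f : K[X]} (hf : f.Separable) :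
    {x | f.eval x = 0}.ncard = f.natDegree := by
  classical
  have hroots : {x | f.eval x = 0} = (f.roots.toFinset : Set K) := by
    ext; simp [hf.ne_zero]
  rw [hroots, Set.ncard_coe_finset, Multiset.toFinset_card_of_nodup (nodup_roots hf),
    IsAlgClosed.card_roots_eq_natDegree]

theorem ncard_setOf_pow_eq [IsAlgClosed K] {n : ℕ} {c : K} (hn : (n : K) ≠ 0) (hc : c ≠ 0) :
    {x : K | x ^ n = c}.ncard = n := by
  have := ncard_setOf_eval_eq_zero (separable_X_pow_sub_C c hn hc)
  simpa [natDegree_X_pow_sub_C, sub_eq_zero] using this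

theorem natDegree_linearized {q : ℕ} (hq : 1 < q) (c : K) :
    (X ^ q ^ 3 + C c * X ^ q ^ 2 - X ^ q - C c * X : K[X]).natDegree = q ^ 3 := by
  have : q < q ^ 2 := by nlinarith
  have : q ^ 2 < q ^ 3 := Nat.pow_lt_pow_right hq (by omega)
  compute_degree!
  · rw [if_neg (by omega), if_neg (by omega), if_neg (by omega)]; simp
  all_goals omega

theorem pow_pred_eq_iff {x c : K} (hx : x ≠ 0) {n : ℕ} (hn : n ≠ 0) :
    x ^ (n - 1) = c ↔ x ^ n = c * x := by
  rw [← Nat.sub_one_add_one hn, pow_succ, Nat.add_sub_cancel, mul_left_inj' hx]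

theorem pow_eq_inv_of_pow_succ_eq_one {s : K} {n : ℕ} (hs : s ^ (n + 1) = 1) : s ^ n = s⁻¹ :=
  eq_inv_of_mul_eq_one_left (by rw [← pow_succ, hs])

theorem pow_add_mul_eq_zero_iff {y c : K} {n : ℕ} (hn : n ≠ 0) :
    y ^ n + c * y = 0 ↔ y = 0 ∨ y ^ (n - 1) = -c := by
  rcases eq_or_ne y 0 with rfl | hy
  · simp [hn]
  · rw [pow_pred_eq_iff hy hn, add_eq_zero_iff_eq_neg, neg_mul]
    simp [hy]

theorem pow_sq_eq_neg_of_pow_pred_eq {n : ℕ} (hn : Odd n) {a y : K} (ha : a ^ (n + 1) = -1)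
    (hy : y ^ (n - 1) = -a) : y ^ n ^ 2 = -y := by
  rcases eq_or_ne y 0 with rfl | hy0
  · simp [hn.pos.ne']
  have hyn : y ^ n = -a * y := (pow_pred_eq_iff hy0 hn.pos.ne').1 hy
  calc y ^ n ^ 2 = (y ^ n) ^ n := by rw [sq, pow_mul]
    _ = a ^ (n + 1) * y := by rw [hyn, mul_pow, hn.neg_pow, hyn, pow_succ]; ring
    _ = -y := by rw [ha]; ring

theorem mul_pow_half_eq_one {n : ℕ} (hn : Odd n) {a b : K} (ha : a ^ (n + 1) = -1)
    (hb : b ^ (n + 1) = -1) (hab : a ^ ((n + 1) / 2) ≠ b ^ ((n + 1) / 2)) :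
    (a * b) ^ ((n + 1) / 2) = 1 := by
  have hhalf : (n + 1) / 2 * 2 = n + 1 := Nat.div_mul_cancel hn.add_one.two_dvd
  have hsq : (a ^ ((n + 1) / 2)) ^ 2 = (b ^ ((n + 1) / 2)) ^ 2 := by
    rw [← pow_mul, ← pow_mul, hhalf, ha, hb]
  have hneg := (sq_eq_sq_iff_eq_or_eq_neg.1 hsq).resolve_left hab
  rw [mul_pow, hneg, neg_mul, ← sq, ← pow_mul, hhalf, hb, neg_neg]

theorem pow_sq_eq_neg_iff {n : ℕ} (hn : Odd n) {t : K} (ht : t ≠ 0) :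
    t ^ n ^ 2 = -t ↔ ((t ^ 2) ^ (n - 1)) ^ ((n + 1) / 2) = -1 := by
  obtain ⟨k, rfl⟩ := hn
  have : ((t ^ 2) ^ (2 * k + 1 - 1)) ^ ((2 * k + 1 + 1) / 2) = t ^ ((2 * k + 1) ^ 2 - 1) := by
    rw [← pow_mul, ← pow_mul, Nat.add_sub_cancel, show (2 * k + 1 + 1) / 2 = k + 1 by omega,
      show (2 * k + 1) ^ 2 - 1 = 2 * (2 * k) * (k + 1) by
        rw [Nat.sub_eq_iff_eq_add (Nat.one_le_pow _ _ (by omega))]; ring, ← mul_assoc]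
  rw [this, pow_pred_eq_iff ht (by positivity), neg_one_mul]

end Field

section Frobenius

variable {F : Type*} [Field F] [Fintype F] {K : Type*} [Field K] [Algebra F K]

local notation "q" => Fintype.card F

theorem frobeniusAlgHom_pow_apply (k : ℕ) (x : K) :
    (frobeniusAlgHom F K ^ k) x = x ^ q ^ k := by
  induction k with
  | zero => simp
  | succ k ih =>
    rw [pow_succ', AlgHom.mul_apply, ih, frobeniusAlgHom_apply, ← pow_mul, ← pow_succ]

theorem add_pow_card (x y : K) : (x + y) ^ q = x ^ q + y ^ q :=
  map_add (frobeniusAlgHom F K) x y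

theorem sub_pow_card (x y : K) : (x - y) ^ q = x ^ q - y ^ q :=
  map_sub (frobeniusAlgHom F K) x y

theorem add_pow_card_pow (x y : K) (k : ℕ) : (x + y) ^ q ^ k = x ^ q ^ k + y ^ q ^ k := by
  simp only [← frobeniusAlgHom_pow_apply, map_add]

theorem ofNat_pow_card_pow (n : ℕ) [n.AtLeastTwo] (k : ℕ) :
    (OfNat.ofNat n : K) ^ q ^ k = OfNat.ofNat n := by
  rw [← frobeniusAlgHom_pow_apply, map_ofNat]

theorem sub_pow_card_pow (x y : K) (k : ℕ) : (x - y) ^ q ^ k = x ^ q ^ k - y ^ q ^ k := by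
  simp only [← frobeniusAlgHom_pow_apply, map_sub]

theorem algebraMap_pow_card (m : F) : algebraMap F K m ^ q = algebraMap F K m :=
  (frobeniusAlgHom F K).commutes m

theorem algebraMap_pow_card_pow (m : F) (k : ℕ) :
    algebraMap F K m ^ q ^ k = algebraMap F K m := by
  rw [← frobeniusAlgHom_pow_apply, AlgHom.commutes]

theorem natCast_card_eq_zero : (q : K) = 0 := by
  rw [← map_natCast (algebraMap F K), cast_card_eq_zero, map_zero]

theorem two_ne_zero_of_odd_card (hq : Odd q) : (2 : K) ≠ 0 := by
  obtain ⟨k, hk⟩ := hq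
  intro h2
  have : (q : K) = 1 := by rw [hk]; push_cast; rw [h2]; ring
  exact zero_ne_one (natCast_card_eq_zero.symm.trans this)

theorem derivative_X_pow_card_pow {k : ℕ} (hk : k ≠ 0) : derivative (X ^ q ^ k : K[X]) = 0 := by
  rw [derivative_X_pow, Nat.cast_pow, natCast_card_eq_zero, zero_pow hk, C_0, zero_mul]

variable (F) in
def linearizedMap (c : K) : K →ₗ[F] K where
  toFun x := x ^ q ^ 3 + c * x ^ q ^ 2 - x ^ q - c * x
  map_add' x y := by simp only [add_pow_card_pow, add_pow_card]; ring
  map_smul' m x := by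
    simp only [Algebra.smul_def, mul_pow, algebraMap_pow_card_pow, algebraMap_pow_card,
      RingHom.id_apply]
    ring

theorem linearized_eq (c x : K) :
    x ^ q ^ 3 + c * x ^ q ^ 2 - x ^ q - c * x = (x ^ q ^ 2 - x) ^ q + c * (x ^ q ^ 2 - x) := by
  rw [sub_pow_card, ← pow_mul, ← pow_succ]; ring

theorem linearized_eq_zero_iff {c : K} (x : K) :
    x ^ q ^ 3 + c * x ^ q ^ 2 - x ^ q - c * x = 0 ↔
      x ^ q ^ 2 = x ∨ (x ^ q ^ 2 - x) ^ (q - 1) = -c := by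
  rw [linearized_eq, pow_add_mul_eq_zero_iff Fintype.card_ne_zero, sub_eq_zero]

theorem derivative_linearized (c : K) :
    derivative (X ^ q ^ 3 + C c * X ^ q ^ 2 - X ^ q - C c * X : K[X]) = C (-c) := by
  have h1 := derivative_X_pow_card_pow (F := F) (K := K) one_ne_zero
  rw [pow_one] at h1
  simp [derivative_X_pow_card_pow (F := F), h1]

theorem ncard_setOf_linearized_eq_zero [IsAlgClosed K] {c : K} (hc : c ≠ 0) :
    {x : K | x ^ q ^ 3 + c * x ^ q ^ 2 - x ^ q - c * x = 0}.ncard = q ^ 3 := by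
  have := ncard_setOf_eval_eq_zero
    (separable_of_derivative_eq_C (neg_ne_zero.2 hc) (derivative_linearized (F := F) c))
  simpa [natDegree_linearized Fintype.one_lt_card] using this

theorem ncard_setOf_pow_card_sq_eq_self [IsAlgClosed K] :
    {x : K | x ^ q ^ 2 = x}.ncard = q ^ 2 := by
  have hq : 1 < q ^ 2 := Nat.one_lt_pow two_ne_zero Fintype.one_lt_card
  have hder : derivative (X ^ q ^ 2 - X : K[X]) = C (-1) := by
    simp [derivative_X_pow_card_pow (F := F)]
  have := ncard_setOf_eval_eq_zero (separable_of_derivative_eq_C (neg_ne_zero.2 one_ne_zero) hder)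
  rw [natDegree_sub_eq_left_of_natDegree_lt (by simpa using hq), natDegree_X_pow] at this
  simpa [sub_eq_zero] using this

/- Raised to the `q`-th power, the two conditions read `u^q = s u` and `u^q - 1 = f (u - 1)`,
which together are linear in `u`. -/
theorem pow_pred_eq_and_sub_one_pow_pred_eq_iff {s f u : K} (hs : s ^ (q + 1) = 1)
    (hf : f ^ (q + 1) = 1) (hs1 : s ≠ 1) (hf1 : f ≠ 1) (hsf : s ≠ f) :
    u ^ (q - 1) = s ∧ (u - 1) ^ (q - 1) = f ↔ u = (1 - f) / (s - f) := by
  have hs0 : s ≠ 0 := by rintro rfl; simp at hs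
  have hf0 : f ≠ 0 := by rintro rfl; simp at hf
  have hq : q ≠ 0 := Fintype.card_ne_zero
  have hq1 : q - 1 ≠ 0 := Nat.sub_ne_zero_of_lt Fintype.one_lt_card
  constructor
  · rintro ⟨hu, hu1⟩
    have hu0 : u ≠ 0 := by rintro rfl; exact hs0 (by rw [← hu, zero_pow hq1])
    have hu10 : u - 1 ≠ 0 := by
      intro h; exact hf0 (by rw [← hu1, h, zero_pow hq1])
    rw [pow_pred_eq_iff hu0 hq] at hu
    rw [pow_pred_eq_iff hu10 hq, sub_pow_card, one_pow, hu] at hu1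
    rw [eq_div_iff (sub_ne_zero.2 hsf)]
    linear_combination hu1
  · rintro rfl
    have hsf0 : s - f ≠ 0 := sub_ne_zero.2 hsf
    have hc0 : (1 - f) / (s - f) ≠ 0 := div_ne_zero (sub_ne_zero.2 hf1.symm) hsf0
    have hc1 : (1 - f) / (s - f) - 1 ≠ 0 := by
      rw [div_sub_one hsf0]
      exact div_ne_zero (by rw [sub_sub_sub_cancel_right]; exact sub_ne_zero.2 hs1.symm) hsf0
    have hcq : ((1 - f) / (s - f)) ^ q = s * ((1 - f) / (s - f)) := by
      rw [div_pow, sub_pow_card, sub_pow_card, one_pow, pow_eq_inv_of_pow_succ_eq_one hs,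
        pow_eq_inv_of_pow_succ_eq_one hf]
      field_simp
      ring
    rw [pow_pred_eq_iff hc0 hq, pow_pred_eq_iff hc1 hq, sub_pow_card, one_pow, hcq]
    refine ⟨rfl, ?_⟩
    field_simp
    ring

theorem setOf_pow_card_sq_eq_neg_and_sq_pow_pred_eq (hq : Odd q) {f s : K}
    (hf : f ^ ((q + 1) / 2) = 1) (hf1 : f ≠ 1) (hs : s ^ ((q + 1) / 2) = -1) :
    {t : K | (t ^ q ^ 2 = -t ∧ (t ^ 2 - 1) ^ (q - 1) = f) ∧ (t ^ 2) ^ (q - 1) = s} =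
      {t | t ^ 2 = (1 - f) / (s - f)} := by
  have hm1 : (-1 : K) ≠ 1 := fun h => two_ne_zero_of_odd_card hq (by linear_combination -h)
  have hhalf : (q + 1) / 2 * 2 = q + 1 := Nat.div_mul_cancel hq.add_one.two_dvd
  have hsq : s ^ (q + 1) = 1 := by rw [← hhalf, pow_mul, hs, neg_one_sq]
  have hfq : f ^ (q + 1) = 1 := by rw [← hhalf, pow_mul, hf, one_pow]
  have hs1 : s ≠ 1 := by rintro rfl; exact hm1 (by rw [← hs, one_pow])
  have hsf : s ≠ f := by rintro rfl; exact hm1 (hs.symm.trans hf)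
  ext t
  simp only [Set.mem_ofPred_eq]
  rw [← pow_pred_eq_and_sub_one_pow_pred_eq_iff hsq hfq hs1 hf1 hsf]
  constructor
  · rintro ⟨⟨-, ht1⟩, hts⟩
    exact ⟨hts, ht1⟩
  · rintro ⟨hts, ht1⟩
    have ht0 : t ≠ 0 := by
      rintro rfl
      rw [← hts, zero_pow two_ne_zero, zero_pow (Nat.sub_ne_zero_of_lt Fintype.one_lt_card),
        zero_pow (by omega), zero_eq_neg] at hs
      exact one_ne_zero hs
    exact ⟨⟨(pow_sq_eq_neg_iff hq ht0).2 (by rw [hts, hs]), ht1⟩, hts⟩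

theorem ncard_setOf_pow_card_sq_eq_neg_and_sq_sub_one_pow [IsAlgClosed K] (hq : Odd q) {f : K}
    (hf : f ^ ((q + 1) / 2) = 1) (hf1 : f ≠ 1) :
    {t : K | t ^ q ^ 2 = -t ∧ (t ^ 2 - 1) ^ (q - 1) = f}.ncard = q + 1 := by
  have h2 : (2 : K) ≠ 0 := two_ne_zero_of_odd_card hq
  have hhalf : (q + 1) / 2 * 2 = q + 1 := Nat.div_mul_cancel hq.add_one.two_dvd
  have hZ : {s : K | s ^ ((q + 1) / 2) = -1}.ncard = (q + 1) / 2 := by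
    refine ncard_setOf_pow_eq (fun h0 => zero_ne_one (α := K) ?_) (neg_ne_zero.2 one_ne_zero)
    have h := congrArg (Nat.cast : ℕ → K) hhalf
    rwa [Nat.cast_mul, h0, zero_mul, Nat.cast_succ, natCast_card_eq_zero, zero_add] at h
  have hmaps : Set.MapsTo (fun t => (t ^ 2) ^ (q - 1))
      {t : K | t ^ q ^ 2 = -t ∧ (t ^ 2 - 1) ^ (q - 1) = f} {s | s ^ ((q + 1) / 2) = -1} := by
    rintro t ⟨ht, htf⟩
    have ht0 : t ≠ 0 := by
      rintro rfl
      rw [zero_pow two_ne_zero, zero_sub, (Nat.Odd.sub_odd hq odd_one).neg_one_pow] at htf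
      exact hf1 htf.symm
    exact (pow_sq_eq_neg_iff hq ht0).1 ht
  have hfib : ∀ s ∈ {s : K | s ^ ((q + 1) / 2) = -1},
      {t ∈ {t : K | t ^ q ^ 2 = -t ∧ (t ^ 2 - 1) ^ (q - 1) = f} | (t ^ 2) ^ (q - 1) = s}.ncard
        = 2 := by
    intro s (hs : s ^ ((q + 1) / 2) = -1)
    have hsf : s - f ≠ 0 := by
      rintro h
      rw [sub_eq_zero.1 h, hf] at hs
      exact two_ne_zero_of_odd_card hq (by linear_combination hs)
    rw [Set.sep_ofPred, setOf_pow_card_sq_eq_neg_and_sq_pow_pred_eq hq hf hf1 hs,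
      ncard_setOf_pow_eq (by exact_mod_cast h2)
        (div_ne_zero (sub_ne_zero.2 (Ne.symm hf1)) hsf)]
  rw [Set.ncard_eq_ncard_mul_of_ncard_fiber hmaps
    (Set.finite_of_ncard_ne_zero (by rw [hZ]; omega)) two_ne_zero hfib, hZ, hhalf]

theorem sub_eq_and_inv_sub_pow_pred_eq_iff (hq : Odd q) {a b y x t : K} (ha : a ^ (q + 1) = -1)
    (hy : y ^ (q - 1) = -a) (hx : 2 * x = y * (t - 1)) :
    (x ^ q ^ 2 - x = y ∧ (x⁻¹ ^ q ^ 2 - x⁻¹) ^ (q - 1) = -b) ↔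
      (t ^ q ^ 2 = -t ∧ (t ^ 2 - 1) ^ (q - 1) = (a * b)⁻¹) := by
  have h2 : (2 : K) ≠ 0 := two_ne_zero_of_odd_card hq
  have hq0 : q ≠ 0 := Fintype.card_ne_zero
  have ha0 : a ≠ 0 := by rintro rfl; simp at ha
  have hy0 : y ≠ 0 := ne_zero_pow (Nat.sub_ne_zero_of_lt Fintype.one_lt_card)
    (by rw [hy]; exact neg_ne_zero.2 ha0)
  have hxq : 2 * x ^ q ^ 2 = -y * (t ^ q ^ 2 - 1) := by
    rw [← ofNat_pow_card_pow (F := F) 2 2, ← mul_pow, hx, mul_pow, sub_pow_card_pow, one_pow,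
      pow_sq_eq_neg_of_pow_pred_eq hq ha hy, neg_mul]
  have hσ : x ^ q ^ 2 - x = y ↔ t ^ q ^ 2 = -t := by
    have : 2 * (x ^ q ^ 2 - x - y) = -y * (t ^ q ^ 2 + t) := by
      rw [mul_sub, mul_sub, hxq, hx]; ring
    rw [← sub_eq_zero, ← mul_right_inj' h2, this, mul_zero, mul_eq_zero, neg_eq_zero,
      or_iff_right hy0, add_eq_zero_iff_eq_neg]
  rw [hσ]
  refine and_congr_right fun ht => ?_
  have ht1 : t - 1 ≠ 0 := by
    rw [sub_ne_zero]; rintro rfl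
    rw [one_pow] at ht
    exact h2 (by linear_combination ht)
  have ht1' : t + 1 ≠ 0 := by
    rw [← sub_neg_eq_add, sub_ne_zero]; rintro rfl
    rw [(hq.pow).neg_pow, one_pow] at ht
    exact h2 (by linear_combination -ht)
  have h4 : (4 : K) ^ (q - 1) = 1 := by
    refine (pow_pred_eq_iff ?_ hq0).2 ?_
    · simpa [show (4 : K) = 2 * 2 by norm_num] using mul_ne_zero h2 h2
    · rw [one_mul]; simpa using ofNat_pow_card_pow (F := F) (K := K) 4 1
  have hinv : x⁻¹ ^ q ^ 2 - x⁻¹ = -4 / (y * (t ^ 2 - 1)) := by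
    have hx' : x = y * (t - 1) / 2 := by rw [eq_div_iff h2, mul_comm, hx]
    have hxq' : x ^ q ^ 2 = y * (t + 1) / 2 := by rw [eq_div_iff h2, mul_comm, hxq, ht]; ring
    have ht2 : t ^ 2 - 1 ≠ 0 := by
      rw [show t ^ 2 - 1 = (t - 1) * (t + 1) by ring]; exact mul_ne_zero ht1 ht1'
    rw [inv_pow, hxq', hx']
    field_simp
    ring
  rw [hinv, div_pow, (Nat.Odd.sub_odd hq odd_one).neg_pow, h4, mul_pow, hy, one_div,
    inv_eq_iff_eq_inv, neg_mul, inv_neg, neg_inj, mul_inv, eq_inv_mul_iff_mul_eq₀ ha0]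

theorem setOf_sub_eq_and_inv_eq_image (hq : Odd q) {a b y : K} (ha : a ^ (q + 1) = -1)
    (hy : y ^ (q - 1) = -a) :
    {x : K | x ^ q ^ 2 - x = y ∧ (x⁻¹ ^ q ^ 2 - x⁻¹) ^ (q - 1) = -b} =
      (fun t => y * (t - 1) / 2) ''
        {t | t ^ q ^ 2 = -t ∧ (t ^ 2 - 1) ^ (q - 1) = (a * b)⁻¹} := by
  have h2 : (2 : K) ≠ 0 := two_ne_zero_of_odd_card hq
  have ha0 : a ≠ 0 := by rintro rfl; simp at ha
  have hy0 : y ≠ 0 := ne_zero_pow (Nat.sub_ne_zero_of_lt Fintype.one_lt_card)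
    (by rw [hy]; exact neg_ne_zero.2 ha0)
  ext x
  constructor
  · intro hx
    refine ⟨2 * x / y + 1, (sub_eq_and_inv_sub_pow_pred_eq_iff hq ha hy ?_).1 hx, ?_⟩ <;>
      field_simp <;> ring
  · rintro ⟨t, ht, rfl⟩
    exact (sub_eq_and_inv_sub_pow_pred_eq_iff hq ha hy (by field_simp)).2 ht

theorem ncard_setOf_sub_pow_pred_eq_and_inv [IsAlgClosed K] (hq : Odd q) {a b : K}
    (ha : a ^ (q + 1) = -1) (hb : b ^ (q + 1) = -1)
    (hab2 : a ^ ((q + 1) / 2) ≠ b ^ ((q + 1) / 2)) (hab : a * b ≠ 1) :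
    {x : K | (x ^ q ^ 2 - x) ^ (q - 1) = -a ∧ (x⁻¹ ^ q ^ 2 - x⁻¹) ^ (q - 1) = -b}.ncard
      = q ^ 2 - 1 := by
  have h2 : (2 : K) ≠ 0 := two_ne_zero_of_odd_card hq
  have hq1 : 1 < q := Fintype.one_lt_card
  have ha0 : a ≠ 0 := by rintro rfl; simp at ha
  have hY : {y : K | y ^ (q - 1) = -a}.ncard = q - 1 :=
    ncard_setOf_pow_eq (by simp [Nat.cast_sub hq1.le, natCast_card_eq_zero]) (neg_ne_zero.2 ha0)
  have hT := ncard_setOf_pow_card_sq_eq_neg_and_sq_sub_one_pow hq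
    (by rw [inv_pow, mul_pow_half_eq_one hq ha hb hab2, inv_one]) (inv_ne_one.2 hab)
  have hfib : ∀ y ∈ {y : K | y ^ (q - 1) = -a},
      {x ∈ {x : K | (x ^ q ^ 2 - x) ^ (q - 1) = -a ∧ (x⁻¹ ^ q ^ 2 - x⁻¹) ^ (q - 1) = -b} |
        x ^ q ^ 2 - x = y}.ncard = q + 1 := by
    intro y (hy : y ^ (q - 1) = -a)
    have hy0 : y ≠ 0 :=
      ne_zero_pow (Nat.sub_ne_zero_of_lt hq1) (by rw [hy]; exact neg_ne_zero.2 ha0)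
    have hfiber : {x ∈ {x : K | (x ^ q ^ 2 - x) ^ (q - 1) = -a ∧
          (x⁻¹ ^ q ^ 2 - x⁻¹) ^ (q - 1) = -b} | x ^ q ^ 2 - x = y} =
        {x : K | x ^ q ^ 2 - x = y ∧ (x⁻¹ ^ q ^ 2 - x⁻¹) ^ (q - 1) = -b} :=
      Set.ext fun x => ⟨fun ⟨⟨_, hxb⟩, hxy⟩ => ⟨hxy, hxb⟩,
        fun ⟨hxy, hxb⟩ => ⟨⟨by rw [hxy, hy], hxb⟩, hxy⟩⟩
    rw [hfiber, setOf_sub_eq_and_inv_eq_image hq ha hy,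
      Set.ncard_image_of_injective _ fun t t' h => ?_, hT]
    simpa [hy0, h2, sub_left_inj] using h
  rw [Set.ncard_eq_ncard_mul_of_ncard_fiber (fun x hx => hx.1)
    (Set.finite_of_ncard_ne_zero (by rw [hY]; omega)) (by omega) hfib, hY]
  simpa [mul_comm] using (Nat.sq_sub_sq q 1).symm

theorem coe_ker_linearizedMap (c : K) :
    (LinearMap.ker (linearizedMap F c) : Set K) =
      {x | x ^ q ^ 3 + c * x ^ q ^ 2 - x ^ q - c * x = 0} :=
  Set.ext fun _ => LinearMap.mem_ker

theorem linearized_diff_zero_inter_inv_preimage_eq {a b : K} (ha0 : a ≠ 0) :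
    {x : K | x ^ q ^ 3 + a * x ^ q ^ 2 - x ^ q - a * x = 0} \ {0} ∩
        (fun x => x⁻¹) ⁻¹' {x | x ^ q ^ 3 + b * x ^ q ^ 2 - x ^ q - b * x = 0} =
      {x | x ^ q ^ 2 = x} \ {0} ∪
        {x | (x ^ q ^ 2 - x) ^ (q - 1) = -a ∧ (x⁻¹ ^ q ^ 2 - x⁻¹) ^ (q - 1) = -b} := by
  have hq1 : q - 1 ≠ 0 := Nat.sub_ne_zero_of_lt Fintype.one_lt_card
  ext x
  simp only [Set.mem_inter_iff, Set.mem_sdiff, Set.mem_preimage, Set.mem_ofPred_eq,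
    Set.mem_singleton_iff, Set.mem_union, linearized_eq_zero_iff, inv_pow, inv_inj]
  by_cases hx : x ^ q ^ 2 = x
  · simp [hx, hq1, ha0]
  · have hx0 : x ≠ 0 := by rintro rfl; exact hx (zero_pow (by positivity))
    simp [hx, hx0]

theorem ncard_inv_image_linearized_inter_linearized [IsAlgClosed K] (hq : Odd q) {a b : K}
    (ha : a ^ (q + 1) = -1) (hb : b ^ (q + 1) = -1)
    (hab2 : a ^ ((q + 1) / 2) ≠ b ^ ((q + 1) / 2)) (hab : a * b ≠ 1) :
    ((fun x => x⁻¹) '' ({x : K | x ^ q ^ 3 + a * x ^ q ^ 2 - x ^ q - a * x = 0} \ {0}) ∩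
      {x | x ^ q ^ 3 + b * x ^ q ^ 2 - x ^ q - b * x = 0}).ncard = 2 * q ^ 2 - 2 := by
  have hq1 : 1 < q := Fintype.one_lt_card
  have ha0 : a ≠ 0 := by rintro rfl; simp at ha
  have hS := ncard_setOf_sub_pow_pred_eq_and_inv hq ha hb hab2 hab
  have hF := ncard_setOf_pow_card_sq_eq_self (F := F) (K := K)
  have hsq : 1 < q ^ 2 := Nat.one_lt_pow two_ne_zero hq1
  have hdisj : Disjoint ({x : K | x ^ q ^ 2 = x} \ {0})
      {x | (x ^ q ^ 2 - x) ^ (q - 1) = -a ∧ (x⁻¹ ^ q ^ 2 - x⁻¹) ^ (q - 1) = -b} := by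
    refine Set.disjoint_left.2 fun x ⟨hx, _⟩ ⟨hxa, _⟩ => ha0 ?_
    rw [show x ^ q ^ 2 - x = 0 from sub_eq_zero.2 hx, zero_pow (by omega)] at hxa
    exact neg_eq_zero.1 hxa.symm
  rw [← Set.image_inter_preimage, Set.ncard_image_of_injective _ inv_injective,
    linearized_diff_zero_inter_inv_preimage_eq ha0,
    Set.ncard_union_eq hdisj (Set.finite_of_ncard_ne_zero (by omega : _ ≠ 0)).sdiff
      (Set.finite_of_ncard_ne_zero (by omega)),
    Set.ncard_sdiff_singleton_of_mem
      (show (0 : K) ∈ {x : K | x ^ q ^ 2 = x} from zero_pow (by positivity)), hF, hS]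
  omega

end Frobenius

/-- For `q` odd and `a, b` with `a^{q+1} = b^{q+1} = -1`, `a^{(q+1)/2} ≠ b^{(q+1)/2}` and
`ab ≠ 1`, the root sets `A`, `B` of `x^{q^3} + a x^{q^2} - x^q - a x` and
`x^{q^3} + b x^{q^2} - x^q - b x` are `F_q`-subspaces of size `q^3` with
`|A⁻¹ ∩ B| = 2q^2 - 2`. -/
theorem stmt9 (F : Type*) [Field F] [Fintype F]
    (K : Type*) [Field K] [Algebra F K] [IsAlgClosure F K]
    (q : ℕ) (hq : Fintype.card F = q) (hqodd : Odd q)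
    (a b : K) (ha : a ^ (q + 1) = -1) (hb : b ^ (q + 1) = -1)
    (hab2 : a ^ ((q + 1) / 2) ≠ b ^ ((q + 1) / 2)) (hab : a * b ≠ 1)
    (A B : Set K)
    (hA : A = {x : K | x ^ q ^ 3 + a * x ^ q ^ 2 - x ^ q - a * x = 0})
    (hB : B = {x : K | x ^ q ^ 3 + b * x ^ q ^ 2 - x ^ q - b * x = 0}) :
    (∃ V : Submodule F K, (V : Set K) = A) ∧ (∃ W : Submodule F K, (W : Set K) = B) ∧
    Nat.card A = q ^ 3 ∧ Nat.card B = q ^ 3 ∧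
    Nat.card ((fun x => x⁻¹) '' (A \ {0}) ∩ B : Set K) = 2 * q ^ 2 - 2 := by
  have : IsAlgClosed K := IsAlgClosure.isAlgClosed F
  subst hq hA hB
  have ha0 : a ≠ 0 := by rintro rfl; simp at ha
  have hb0 : b ≠ 0 := by rintro rfl; simp at hb
  simp only [Nat.card_coe_set_eq]
  exact ⟨⟨_, coe_ker_linearizedMap a⟩, ⟨_, coe_ker_linearizedMap b⟩,
    ncard_setOf_linearized_eq_zero ha0, ncard_setOf_linearized_eq_zero hb0,
    ncard_inv_image_linearized_inter_linearized hqodd ha hb hab2 hab⟩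
end

section
/- Let A and B be F_q-subspaces of the algebraic closure of F_q of size q^d with d ≥ 3, and suppose that (A^{-1} ∩ B) ∪ {0} contains a one-dimensional F_{q^{d-1}}-subspace of the algebraic closure. Then |A^{-1} ∩ B| ≤ q^{d-1} + 2q^2 − 3. -/
/-!
Let `E = 𝔽_{q^{d-1}} ⊆ K`. The hypothesis gives `γE ⊆ B` and `γ⁻¹E ⊆ A`, both of index `q`.
Elements of `S = A⁻¹ ∩ B` inside `γE` number at most `|E| - 1`. Every other `x ∈ S` lies in a
nonzero coset of `γE` in `B`, and `x⁻¹` in a nonzero coset of `γ⁻¹E` in `A`; at most two `x`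
share both cosets. Indeed, after rescaling `γ = 1`, if `y ≠ x` shares them then `x - y ∈ E`
and `x⁻¹ - y⁻¹ ∈ E`, hence `xy ∈ E`; for a second such `z ≠ y` we get `(y - z) x = xy - xz ∈ E`,
forcing `x ∈ E`. So `|S| ≤ |E| - 1 + 2 (q - 1)²`.
-/

open Polynomial Pointwise

lemma Set.ncard_le_two_mul_ncard_of_mapsTo {α β : Type*} {s : Set α} {t : Set β} {f : α → β}
    (hs : s.Finite) (ht : t.Finite) (hf : Set.MapsTo f s t)
    (hfib : ∀ x ∈ s, ∀ y ∈ s, ∀ z ∈ s, f x = f y → f x = f z → x ≠ y → x ≠ z → y = z) :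
    s.ncard ≤ 2 * t.ncard := by
  classical
  rw [Set.ncard_eq_toFinset_card s hs, Set.ncard_eq_toFinset_card t ht]
  refine Finset.card_le_mul_card_image_of_maps_to
    (fun x hx => by simpa using hf (by simpa using hx)) 2 fun c _ => ?_
  by_contra! h
  obtain ⟨x, hx, y, hy, z, hz, hxy, hxz, hyz⟩ := Finset.two_lt_card.mp h
  simp only [Finset.mem_filter, Set.Finite.mem_toFinset] at hx hy hz
  exact hyz (hfib x hx.1 y hy.1 z hz.1 (hx.2.trans hy.2.symm) (hx.2.trans hz.2.symm) hxy hxz)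

lemma AddSubgroup.ncard_map_mk'_sdiff_zero {G : Type*} [AddCommGroup G] (H B : AddSubgroup G) :
    ((B.map (QuotientAddGroup.mk' H) : Set (G ⧸ H)) \ {0}).ncard = H.relIndex B - 1 := by
  rw [Set.ncard_sdiff_singleton_of_mem (zero_mem _), ← Nat.card_coe_set_eq, SetLike.coe_sort_coe,
    ← AddSubgroup.relIndex_ker, QuotientAddGroup.ker_mk']

lemma AddSubgroup.relIndex_eq_of_card_eq_mul {G : Type*} [AddGroup G] {H B : AddSubgroup G} {n : ℕ}
    (h : H ≤ B) (hH : Nat.card H ≠ 0) (hB : Nat.card B = n * Nat.card H) : H.relIndex B = n := by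
  rw [← Nat.card_congr (AddSubgroup.addSubgroupOfEquivOfLe h).toEquiv] at hH hB
  rw [← AddSubgroup.index_mul_card (H.addSubgroupOf B)] at hB
  exact Nat.eq_of_mul_eq_mul_right (Nat.pos_of_ne_zero hH) hB

lemma mem_image_inv_sdiff_zero {K : Type*} [Field K] {s : Set K} {x : K} :
    x ∈ (fun x => x⁻¹) '' (s \ {0}) ↔ x ≠ 0 ∧ x⁻¹ ∈ s := by
  constructor
  · rintro ⟨y, ⟨hy, hy0⟩, rfl⟩
    exact ⟨inv_ne_zero hy0, by simpa using hy⟩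
  · rintro ⟨hx0, hx⟩
    exact ⟨x⁻¹, ⟨hx, inv_ne_zero hx0⟩, inv_inv x⟩

namespace Subfield

variable {K : Type*} [Field K] (E : Subfield K)

lemma mul_mem_of_sub_mem_of_inv_sub_mem {x y : K} (hx : x ≠ 0) (hy : y ≠ 0) (hxy : x ≠ y)
    (h : x - y ∈ E) (h' : x⁻¹ - y⁻¹ ∈ E) : x * y ∈ E := by
  have hinv : x⁻¹ - y⁻¹ ≠ 0 := sub_ne_zero.mpr (inv_injective.ne hxy)
  rw [show x * y = -(x - y) / (x⁻¹ - y⁻¹) by field_simp; ring]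
  exact div_mem (neg_mem h) h'

lemma eq_of_sub_mem_of_inv_sub_mem {x y z : K} (hx : x ∉ E) (hy : x - y ∈ E) (hz : x - z ∈ E)
    (hy' : x⁻¹ - y⁻¹ ∈ E) (hz' : x⁻¹ - z⁻¹ ∈ E) (hxy : x ≠ y) (hxz : x ≠ z) : y = z := by
  have hne0 {w : K} (hw : x - w ∈ E) : w ≠ 0 := by
    rintro rfl
    exact hx (by simpa using hw)
  have hx0 : x ≠ 0 := fun h => hx (h ▸ zero_mem E)
  have hxy' := E.mul_mem_of_sub_mem_of_inv_sub_mem hx0 (hne0 hy) hxy hy hy'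
  have hxz' := E.mul_mem_of_sub_mem_of_inv_sub_mem hx0 (hne0 hz) hxz hz hz'
  by_contra hyz
  have hyz' : y - z ∈ E := by simpa using sub_mem hz hy
  apply hx
  rw [show x = (x * y - x * z) / (y - z) by field_simp [sub_ne_zero.mpr hyz]]
  exact div_mem (sub_mem hxy' hxz') hyz'

lemma mem_smul_toAddSubgroup {γ x : K} (hγ : γ ≠ 0) :
    x ∈ γ • E.toAddSubgroup ↔ γ⁻¹ * x ∈ E := by
  rw [← SetLike.mem_coe, AddSubgroup.coe_pointwise_smul, Set.mem_smul_set_iff_inv_smul_mem₀ hγ]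
  rfl

lemma card_smul_toAddSubgroup {γ : K} (hγ : γ ≠ 0) :
    Nat.card ↥(γ • E.toAddSubgroup) = Nat.card E := by
  have : ((γ • E.toAddSubgroup : AddSubgroup K) : Set K) = (γ * ·) '' (E : Set K) := by
    rw [AddSubgroup.coe_pointwise_smul, ← Set.image_smul]
    rfl
  rw [← SetLike.coe_sort_coe, this, Nat.card_image_of_injective (mul_right_injective₀ hγ)]
  rfl

lemma inv_mem_smul_toAddSubgroup_iff {γ x : K} (hγ : γ ≠ 0) :
    x⁻¹ ∈ γ⁻¹ • E.toAddSubgroup ↔ x ∈ γ • E.toAddSubgroup := by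
  rw [E.mem_smul_toAddSubgroup hγ, E.mem_smul_toAddSubgroup (inv_ne_zero hγ), inv_inv,
    ← inv_mem_iff (x := γ⁻¹ * x), mul_inv, inv_inv, mul_comm]

lemma eq_of_sub_mem_smul_of_inv_sub_mem_smul {γ x y z : K} (hγ : γ ≠ 0)
    (hx : x ∉ γ • E.toAddSubgroup)
    (hy : x - y ∈ γ • E.toAddSubgroup) (hz : x - z ∈ γ • E.toAddSubgroup)
    (hy' : x⁻¹ - y⁻¹ ∈ γ⁻¹ • E.toAddSubgroup) (hz' : x⁻¹ - z⁻¹ ∈ γ⁻¹ • E.toAddSubgroup)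
    (hxy : x ≠ y) (hxz : x ≠ z) : y = z := by
  simp only [E.mem_smul_toAddSubgroup hγ, E.mem_smul_toAddSubgroup (inv_ne_zero hγ), inv_inv,
    mul_sub] at hx hy hz hy' hz'
  have hscale {w : K} : γ * w⁻¹ = (γ⁻¹ * w)⁻¹ := by rw [mul_inv, inv_inv]
  rw [hscale, hscale] at hy' hz'
  have hγ' := mul_right_injective₀ (inv_ne_zero hγ)
  exact hγ' (E.eq_of_sub_mem_of_inv_sub_mem hx hy hz hy' hz' (hγ'.ne hxy) (hγ'.ne hxz))

theorem ncard_inv_inter_sdiff_smul_le {A B : AddSubgroup K} [Finite A] [Finite B] {γ : K}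
    (hγ : γ ≠ 0) :
    (((fun x => x⁻¹) '' ((A : Set K) \ {0}) ∩ B) \ (γ • E.toAddSubgroup : AddSubgroup K)).ncard ≤
      2 * (((γ • E.toAddSubgroup).relIndex B - 1) *
        ((γ⁻¹ • E.toAddSubgroup).relIndex A - 1)) := by
  set H := γ • E.toAddSubgroup
  set H' := γ⁻¹ • E.toAddSubgroup
  rw [← AddSubgroup.ncard_map_mk'_sdiff_zero H B, ← AddSubgroup.ncard_map_mk'_sdiff_zero H' A,
    ← Set.ncard_prod]
  refine Set.ncard_le_two_mul_ncard_of_mapsTo (f := fun x => ((x : K ⧸ H), ((x⁻¹ : K) : K ⧸ H')))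
    ((Set.toFinite B).subset fun x hx => hx.1.2) ?_ ?_ ?_
  · simp only [AddSubgroup.coe_map]
    exact (((B : Set K).toFinite.image _).sdiff).prod ((A : Set K).toFinite.image _).sdiff
  · rintro x ⟨⟨hxA, hxB⟩, hxH⟩
    rw [mem_image_inv_sdiff_zero] at hxA
    refine ⟨⟨⟨x, hxB, rfl⟩, ?_⟩, ⟨x⁻¹, hxA.2, rfl⟩, ?_⟩
    · simpa [QuotientAddGroup.eq_zero_iff] using hxH
    · simpa [QuotientAddGroup.eq_zero_iff, H', E.inv_mem_smul_toAddSubgroup_iff hγ] using hxH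
  · rintro x ⟨-, hx⟩ y - z - hxy hxz hne hne'
    simp only [Prod.ext_iff, QuotientAddGroup.eq_iff_sub_mem] at hxy hxz
    exact E.eq_of_sub_mem_smul_of_inv_sub_mem_smul hγ hx hxy.1 hxz.1 hxy.2 hxz.2 hne hne'

theorem ncard_inv_inter_add_one_le [Finite E] {A B : AddSubgroup K} [Finite A] [Finite B] {γ : K}
    (hγ : γ ≠ 0) :
    ((fun x => x⁻¹) '' ((A : Set K) \ {0}) ∩ B).ncard + 1 ≤ Nat.card E +
      2 * (((γ • E.toAddSubgroup).relIndex B - 1) * ((γ⁻¹ • E.toAddSubgroup).relIndex A - 1)) := by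
  set S := (fun x => x⁻¹) '' ((A : Set K) \ {0}) ∩ B
  set H := γ • E.toAddSubgroup
  have hS : S.Finite := (Set.toFinite B).subset Set.inter_subset_right
  have hH : (H : Set K).Finite := by
    rw [← Set.finite_coe_iff, SetLike.coe_sort_coe]
    exact Nat.finite_of_card_ne_zero (by rw [E.card_smul_toAddSubgroup hγ]; exact Nat.card_pos.ne')
  have hinter : (S ∩ H).ncard + 1 ≤ Nat.card E := by
    have hsub : S ∩ H ⊆ (H : Set K) \ {0} := fun x hx =>
      ⟨hx.2, (mem_image_inv_sdiff_zero.mp hx.1.1).1⟩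
    rw [← E.card_smul_toAddSubgroup hγ, ← SetLike.coe_sort_coe, Nat.card_coe_set_eq,
      ← Set.ncard_sdiff_singleton_add_one (zero_mem H) hH]
    exact Nat.add_le_add_right (Set.ncard_le_ncard hsub hH.sdiff) 1
  rw [← Set.ncard_inter_add_ncard_sdiff_eq_ncard S H hS]
  have hdiff : (S \ H).ncard ≤ 2 * ((H.relIndex B - 1) *
      ((γ⁻¹ • E.toAddSubgroup).relIndex A - 1)) := E.ncard_inv_inter_sdiff_smul_le hγ
  omega

lemma smul_le_of_image_subset {A B : AddSubgroup K} {γ : K} (hγ : γ ≠ 0)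
    (h : (γ * ·) '' (E : Set K) ⊆ ((fun x => x⁻¹) '' ((A : Set K) \ {0}) ∩ B) ∪ {0}) :
    γ • E.toAddSubgroup ≤ B ∧ γ⁻¹ • E.toAddSubgroup ≤ A := by
  have hmem {x : K} (hx : γ⁻¹ * x ∈ E) : x = 0 ∨ (x⁻¹ ∈ A ∧ x ∈ B) := by
    have := h ⟨_, hx, mul_inv_cancel_left₀ hγ x⟩
    rw [Set.mem_union, Set.mem_inter_iff, mem_image_inv_sdiff_zero] at this
    tauto
  constructor
  · intro x hx
    rcases hmem ((E.mem_smul_toAddSubgroup hγ).mp hx) with rfl | h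
    exacts [zero_mem B, h.2]
  · intro x hx
    rw [← inv_inv x, E.inv_mem_smul_toAddSubgroup_iff hγ, E.mem_smul_toAddSubgroup hγ] at hx
    rcases hmem hx with h0 | h
    exacts [by rw [inv_eq_zero.mp h0]; exact zero_mem A, by simpa using h.1]

theorem ncard_inv_inter_add_one_le_of_card_eq [Finite E] {A B : AddSubgroup K} [Finite A]
    [Finite B] {γ : K} {n : ℕ} (hγ : γ ≠ 0)
    (h : (γ * ·) '' (E : Set K) ⊆ ((fun x => x⁻¹) '' ((A : Set K) \ {0}) ∩ B) ∪ {0})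
    (hA : Nat.card A = n * Nat.card E) (hB : Nat.card B = n * Nat.card E) :
    ((fun x => x⁻¹) '' ((A : Set K) \ {0}) ∩ B).ncard + 1 ≤
      Nat.card E + 2 * ((n - 1) * (n - 1)) := by
  obtain ⟨hBE, hAE⟩ := E.smul_le_of_image_subset hγ h
  have hE : Nat.card E ≠ 0 := Nat.card_pos.ne'
  have hcount := E.ncard_inv_inter_add_one_le (A := A) (B := B) hγ
  rwa [AddSubgroup.relIndex_eq_of_card_eq_mul hBE (by rwa [E.card_smul_toAddSubgroup hγ])
      (by rwa [E.card_smul_toAddSubgroup hγ]),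
    AddSubgroup.relIndex_eq_of_card_eq_mul hAE (by rwa [E.card_smul_toAddSubgroup (inv_ne_zero hγ)])
      (by rwa [E.card_smul_toAddSubgroup (inv_ne_zero hγ)])] at hcount

end Subfield

lemma card_eqLocusField_iterateFrobenius (K : Type*) [Field K] [IsAlgClosed K] (p : ℕ)
    [Fact p.Prime] [CharP K p] {n : ℕ} (hn : n ≠ 0) :
    Nat.card ((iterateFrobenius K p n).eqLocusField (RingHom.id K)) = p ^ n := by
  classical
  have hp : 1 < p := Fact.out (p := p.Prime) |>.one_lt
  have hroots : ((iterateFrobenius K p n).eqLocusField (RingHom.id K) : Set K) =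
      (X ^ p ^ n - X : K[X]).rootSet K := by
    ext x
    simp [mem_rootSet, FiniteField.X_pow_card_pow_sub_X_ne_zero K hn hp, sub_eq_zero,
      iterateFrobenius_def]
  rw [← SetLike.coe_sort_coe, hroots, Nat.card_eq_fintype_card,
    card_rootSet_eq_natDegree (galois_poly_separable p _ (dvd_pow_self p hn))
      (IsAlgClosed.splits _), FiniteField.X_pow_card_pow_sub_X_natDegree_eq K hn hp]

lemma exists_subfield_coe_eq_setOf_pow_eq_self (F K : Type*) [Field F] [Fintype F] [Field K]
    [Algebra F K] [IsAlgClosed K] {n : ℕ} (hn : n ≠ 0) :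
    ∃ E : Subfield K, (E : Set K) = {t | t ^ Fintype.card F ^ n = t} ∧
      Nat.card E = Fintype.card F ^ n := by
  obtain ⟨p, _⟩ := CharP.exists F
  obtain ⟨k, hp, hcard⟩ := FiniteField.card F p
  have := Fact.mk hp
  have : CharP K p := charP_of_injective_algebraMap (algebraMap F K).injective p
  have hN : p ^ (k * n) = Fintype.card F ^ n := by rw [pow_mul, ← hcard]
  refine ⟨(iterateFrobenius K p (k * n)).eqLocusField (RingHom.id K), ?_, ?_⟩
  · ext t
    rw [SetLike.mem_coe, RingHom.mem_eqLocusField, iterateFrobenius_def, hN]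
    rfl
  · rw [card_eqLocusField_iterateFrobenius K p (mul_ne_zero k.ne_zero hn), hN]

/-- If `(A⁻¹ ∩ B) ∪ {0}` contains a one-dimensional `F_{q^{d-1}}`-subspace, where `A`, `B` are
`F_q`-subspaces of size `q^d ≥ q^3`, then `|A⁻¹ ∩ B| ≤ q^{d-1} + 2q^2 - 3`. -/
theorem stmt12 (F : Type*) [Field F] [Fintype F]
    (K : Type*) [Field K] [Algebra F K] [IsAlgClosure F K]
    (q d : ℕ) (hq : Fintype.card F = q) (hd : 3 ≤ d)
    (A B : Submodule F K)
    (hA : Nat.card A = q ^ d) (hB : Nat.card B = q ^ d)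
    (hcontains : ∃ γ : K, γ ≠ 0 ∧
      (fun t => γ * t) '' {t : K | t ^ q ^ (d - 1) = t} ⊆
        ((fun x => x⁻¹) '' ((A : Set K) \ {0}) ∩ (B : Set K)) ∪ {0}) :
    Nat.card ((fun x => x⁻¹) '' ((A : Set K) \ {0}) ∩ (B : Set K) : Set K)
      ≤ q ^ (d - 1) + 2 * q ^ 2 - 3 := by
  obtain ⟨γ, hγ, hsub⟩ := hcontains
  have := IsAlgClosure.isAlgClosed F (K := K)
  obtain ⟨E, hE, hEcard⟩ := exists_subfield_coe_eq_setOf_pow_eq_self F K (n := d - 1) (by omega)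
  rw [hq] at hE hEcard
  have hq1 : 1 ≤ q := hq ▸ Fintype.card_pos
  have hcard : q ^ d = q * Nat.card E := by rw [hEcard, ← pow_succ', Nat.sub_add_cancel (by omega)]
  have : Finite E := Nat.finite_of_card_ne_zero (by rw [hEcard]; positivity)
  have : Finite A := Nat.finite_of_card_ne_zero (by rw [hA]; positivity)
  have : Finite B := Nat.finite_of_card_ne_zero (by rw [hB]; positivity)
  have hcount := E.ncard_inv_inter_add_one_le_of_card_eq (A := A.toAddSubgroup)
    (B := B.toAddSubgroup) hγ (hE ▸ hsub) (hA.trans hcard) (hB.trans hcard)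
  have hsq : (q - 1) * (q - 1) + 1 ≤ q ^ 2 := by
    obtain ⟨r, rfl⟩ : ∃ r, q = r + 1 := ⟨q - 1, by omega⟩
    simp only [Nat.add_sub_cancel]
    nlinarith
  simp only [Submodule.coe_toAddSubgroup, hEcard] at hcount
  rw [Nat.card_coe_set_eq]
  generalize q ^ (d - 1) = N at hcount ⊢
  omega
end
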